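/- arXiv:math/9605211 — 11 statements merged into one kernel-verified Lean document; each statement's English description precedes it below -/
import Mathlib

section
/- Let κ be a regular uncountable cardinal. If principle C(κ) holds, then principle D(κ) holds. -/
/-!
Apply C(κ) to the set of all finite sequences. Its first alternative is the conclusion of D(κ);
we refute the second one, given by `t` and stationary `D i` with `A[s,t] = ∅` for every injective
`s` with `s i ∈ D i`. For `x ∈ ℕ` let `W x i = {α ∈ D i | x ∈ A(α, t i)}` and let `F` be the
union of those `W x i` that are finite. `F` is countable, hence bounded below `κ` by regularity,
so every `D i \ F` is stationary and `⋃ α ∈ D i \ F, A(α, t i)` lies in `L_st(A)`. Centeredness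
yields an `x` in all of these sets; then each `W x i` meets the complement of `F`, so is infinite,
and an injective selection `s i ∈ W x i` puts `x` into `A[s,t]`.
-/

open Cardinal

/-- `C` is closed and unbounded (club) in the ordinal `o`. -/
def ClubIn (o : Ordinal) (C : Set Ordinal) : Prop :=
  C ⊆ Set.Iio o ∧ (∀ α < o, ∃ β ∈ C, α < β) ∧
    ∀ α < o, 0 < α → (∀ β < α, ∃ γ ∈ C, β < γ ∧ γ < α) → α ∈ C

/-- `S` is a stationary subset of the ordinal `o`: it meets every club subset of `o`. -/
def StationaryIn (o : Ordinal) (S : Set Ordinal) : Prop :=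
  S ⊆ Set.Iio o ∧ ∀ C, ClubIn o C → (S ∩ C).Nonempty

/-- `S` is a cofinal (unbounded) subset of the ordinal `o`. -/
def CofinalIn (o : Ordinal) (S : Set Ordinal) : Prop :=
  S ⊆ Set.Iio o ∧ ∀ α < o, ∃ β ∈ S, α < β

/-- For a matrix `A` of subsets of `ℕ`, a finite sequence `t ∈ ω^{<ω}` and
`s : {0,…,|t|-1} → Ordinal`, this is `A[s,t] = ⋂_{i<|t|} A(s i, t i)`. -/
def MatInt (A : Ordinal → ℕ → Set ℕ) (t : List ℕ) (s : Fin t.length → Ordinal) : Set ℕ :=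
  ⋂ i, A (s i) (t.get i)

/-- Principle C(κ). -/
def PrincipleC (κ : Cardinal) : Prop :=
  ∀ (T : Set (List ℕ)) (A : Ordinal → ℕ → Set ℕ),
    (∃ S : Set Ordinal, StationaryIn κ.ord S ∧
      ∀ t ∈ T, ∀ s : Fin t.length → Ordinal, Function.Injective s →
        (∀ i, s i ∈ S) → (MatInt A t s).Nonempty) ∨
    (∃ t ∈ T, ∃ D : Fin t.length → Set Ordinal,
      (∀ i, StationaryIn κ.ord (D i)) ∧
      ∀ s : Fin t.length → Ordinal, Function.Injective s →
        (∀ i, s i ∈ D i) → MatInt A t s = ∅)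

/-- A family of subsets of `ℕ` is centered if every finite subfamily has
nonempty intersection. -/
def Centered (L : Set (Set ℕ)) : Prop :=
  ∀ F : Finset (Set ℕ), ↑F ⊆ L → (⋂₀ (F : Set (Set ℕ))).Nonempty

/-- The restriction of the matrix `A` to `S` is ω-adic. -/
def OmegaAdicOn (A : Ordinal → ℕ → Set ℕ) (S : Set Ordinal) : Prop :=
  ∀ (t : List ℕ) (s : Fin t.length → Ordinal), Function.Injective s →
    (∀ i, s i ∈ S) → (MatInt A t s).Nonempty

/-- `L_st(A)`: the sets `Y ⊆ ℕ` such that `{α < κ : ∃ n, A(α,n) ⊆ Y}` is stationary in `κ`. -/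
def Lst (κ : Cardinal) (A : Ordinal → ℕ → Set ℕ) : Set (Set ℕ) :=
  {Y : Set ℕ | StationaryIn κ.ord {α : Ordinal | α < κ.ord ∧ ∃ n : ℕ, A α n ⊆ Y}}

/-- Principle D(κ). -/
def PrincipleD (κ : Cardinal) : Prop :=
  ∀ A : Ordinal → ℕ → Set ℕ, Centered (Lst κ A) →
    ∃ S : Set Ordinal, StationaryIn κ.ord S ∧ OmegaAdicOn A S

theorem StationaryIn.mono {o : Ordinal} {S S' : Set Ordinal} (hS : StationaryIn o S)
    (hsub : S ⊆ S') (hS' : S' ⊆ Set.Iio o) : StationaryIn o S' :=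
  ⟨hS', fun C hC => (hS.2 C hC).mono (Set.inter_subset_inter_left C hsub)⟩

theorem ClubIn.inter_Ioi {o β : Ordinal} {C : Set Ordinal} (hC : ClubIn o C) (hβ : β < o) :
    ClubIn o (C ∩ Set.Ioi β) := by
  obtain ⟨hsub, hunb, hclosed⟩ := hC
  refine ⟨fun x hx => hsub hx.1, fun α hα => ?_, fun α hα hpos hlim => ?_⟩
  · obtain ⟨γ, hγC, hγ⟩ := hunb (max α β) (max_lt hα hβ)
    exact ⟨γ, ⟨hγC, (le_max_right α β).trans_lt hγ⟩, (le_max_left α β).trans_lt hγ⟩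
  · have hαC : α ∈ C := hclosed α hα hpos fun b hb => by
      obtain ⟨γ, hγ, hbγ, hγα⟩ := hlim b hb
      exact ⟨γ, hγ.1, hbγ, hγα⟩
    obtain ⟨γ, hγ, -, hγα⟩ := hlim 0 hpos
    exact ⟨hαC, hγ.2.trans hγα⟩

theorem StationaryIn.diff_of_le {o β : Ordinal} {S F : Set Ordinal} (hS : StationaryIn o S)
    (hβ : β < o) (hF : ∀ γ ∈ F, γ < o → γ ≤ β) : StationaryIn o (S \ F) := by
  refine ⟨Set.sdiff_subset.trans hS.1, fun C hC => ?_⟩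
  obtain ⟨γ, hγS, hγC, hβγ⟩ := hS.2 _ (hC.inter_Ioi hβ)
  exact ⟨γ, ⟨hγS, fun hγF => (hF γ hγF (hS.1 hγS)).not_gt hβγ⟩, hγC⟩

theorem sSup_lt_ord_of_countable {κ : Cardinal} (hreg : κ.IsRegular) (hunc : ℵ₀ < κ)
    {F : Set Ordinal} (hF : F.Countable) (hlt : ∀ γ ∈ F, γ < κ.ord) : sSup F < κ.ord := by
  refine Ordinal.sSup_lt_of_lt_cof ?_ hlt
  rw [← Ordinal.lift_cof, hreg.cof_ord]
  exact hF.le_aleph0.trans_lt (Cardinal.aleph0_lt_lift.mpr hunc)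

theorem StationaryIn.diff_countable {κ : Cardinal} (hreg : κ.IsRegular) (hunc : ℵ₀ < κ)
    {S F : Set Ordinal} (hS : StationaryIn κ.ord S) (hF : F.Countable) :
    StationaryIn κ.ord (S \ F) :=
  hS.diff_of_le (β := sSup (F ∩ Set.Iio κ.ord))
    (sSup_lt_ord_of_countable hreg hunc (hF.mono Set.inter_subset_left) fun _ hγ => hγ.2)
    fun _ hγF hγ => le_csSup ⟨κ.ord, fun _ h => h.2.le⟩ ⟨hγF, hγ⟩

theorem exists_injective_forall_mem_of_infinite {ι α : Type*} [Fintype ι] (W : ι → Set α)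
    (hW : ∀ i, (W i).Infinite) : ∃ s : ι → α, Function.Injective s ∧ ∀ i, s i ∈ W i := by
  classical
  choose T hTW hTcard using fun i => (hW i).exists_subset_card_eq (Fintype.card ι)
  obtain ⟨s, hs, hsT⟩ := (Finset.all_card_le_biUnion_card_iff_existsInjective' T).mp
    fun I => I.eq_empty_or_nonempty.elim (fun h => by simp [h]) fun ⟨i, hi⟩ =>
      calc I.card ≤ Fintype.card ι := I.card_le_univ
        _ = (T i).card := (hTcard i).symm
        _ ≤ (I.biUnion T).card := Finset.card_le_card (Finset.subset_biUnion_of_mem T hi)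
  exact ⟨s, hs, fun i => hTW i (hsT i)⟩

theorem Centered.exists_forall_mem {L : Set (Set ℕ)} (hL : Centered L) {ι : Type*} [Fintype ι]
    (Y : ι → Set ℕ) (hY : ∀ i, Y i ∈ L) : ∃ x, ∀ i, x ∈ Y i := by
  classical
  obtain ⟨x, hx⟩ := hL (Finset.univ.image Y) (by simpa [Set.range_subset_iff] using hY)
  exact ⟨x, fun i => hx (Y i) (by simp)⟩

theorem biUnion_mem_Lst {κ : Cardinal} (A : Ordinal → ℕ → Set ℕ) {E : Set Ordinal}
    (hE : StationaryIn κ.ord E) (n : ℕ) : (⋃ α ∈ E, A α n) ∈ Lst κ A :=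
  hE.mono (fun _ hα => ⟨hE.1 hα, n, Set.subset_biUnion_of_mem (u := (A · n)) hα⟩)
    fun _ hα => hα.1

theorem exists_injective_matInt_nonempty {κ : Cardinal} (hreg : κ.IsRegular) (hunc : ℵ₀ < κ)
    {A : Ordinal → ℕ → Set ℕ} (hcent : Centered (Lst κ A)) (t : List ℕ)
    {D : Fin t.length → Set Ordinal} (hD : ∀ i, StationaryIn κ.ord (D i)) :
    ∃ s : Fin t.length → Ordinal, Function.Injective s ∧ (∀ i, s i ∈ D i) ∧
      (MatInt A t s).Nonempty := by
  set W : ℕ → Fin t.length → Set Ordinal := fun x i => {α ∈ D i | x ∈ A α (t.get i)}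
  set F : Set Ordinal := ⋃ (x) (i) (_ : (W x i).Finite), W x i
  have hFc : F.Countable :=
    Set.countable_iUnion fun x => Set.countable_iUnion fun i =>
      Set.countable_iUnion fun hfin => hfin.countable
  obtain ⟨x, hx⟩ := hcent.exists_forall_mem _ fun i =>
    biUnion_mem_Lst A ((hD i).diff_countable hreg hunc hFc) (t.get i)
  have hWinf : ∀ i, (W x i).Infinite := fun i hfin => by
    obtain ⟨α, ⟨hαD, hαF⟩, hxα⟩ := Set.mem_iUnion₂.mp (hx i)
    exact hαF (Set.mem_iUnion₂.mpr ⟨x, i, Set.mem_iUnion.mpr ⟨hfin, hαD, hxα⟩⟩)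
  obtain ⟨s, hs, hsW⟩ := exists_injective_forall_mem_of_infinite _ hWinf
  exact ⟨s, hs, fun i => (hsW i).1, x, Set.mem_iInter.mpr fun i => (hsW i).2⟩

/-- If κ is a regular uncountable cardinal and C(κ) holds, then D(κ) holds. -/
theorem statement_0 (κ : Cardinal) (hreg : κ.IsRegular) (hunc : ℵ₀ < κ)
    (hC : PrincipleC κ) : PrincipleD κ := by
  intro A hcent
  rcases hC Set.univ A with ⟨S, hS, hAdic⟩ | ⟨t, -, D, hD, hempty⟩
  · exact ⟨S, hS, fun t => hAdic t trivial⟩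
  obtain ⟨s, hs, hsD, hne⟩ := exists_injective_matInt_nonempty hreg hunc hcent t hD
  exact absurd (hempty s hs hsD) hne.ne_empty
end

section
/- Let κ be a regular uncountable cardinal. If principle E(κ) holds, then principle C*(κ) holds. -/
open Cardinal

/-- Principle E(κ). -/
def PrincipleE (κ : Cardinal) : Prop :=
  ∀ (T : Set (List ℕ)) (A : Ordinal → ℕ → Set ℕ),
    (∃ S : Set Ordinal, StationaryIn κ.ord S ∧
      {X : Set ℕ | ∃ t ∈ T, ∃ s : Fin (List.length t) → Ordinal,
        Function.Injective s ∧ (∀ i, s i ∈ S) ∧ X = MatInt A t s}.Countable) ∨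
    (∃ t ∈ T, ∃ D : Fin t.length → Set Ordinal,
      (∀ i, StationaryIn κ.ord (D i)) ∧
      ∀ s₀ s₁ : Fin t.length → Ordinal, Function.Injective s₀ → Function.Injective s₁ →
        (∀ i, s₀ i ∈ D i) → (∀ i, s₁ i ∈ D i) → (∀ i, s₀ i ≠ s₁ i) →
          MatInt A t s₀ ≠ MatInt A t s₁)

/-- Principle C*(κ). -/
def PrincipleCstar (κ : Cardinal) : Prop :=
  ∀ (T : Set (List ℕ)) (A : Ordinal → ℕ → Set ℕ),
    (∃ S : Set Ordinal, StationaryIn κ.ord S ∧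
      ∀ t ∈ T, ∀ s : Fin t.length → Ordinal, Function.Injective s →
        (∀ i, s i ∈ S) → (MatInt A t s).Finite) ∨
    (∃ t ∈ T, ∃ D : Fin t.length → Set Ordinal,
      (∀ i, StationaryIn κ.ord (D i)) ∧
      ∀ s : Fin t.length → Ordinal, Function.Injective s →
        (∀ i, s i ∈ D i) → (MatInt A t s).Infinite)

/-!
Assume alternative (2) of `C*(κ)` fails, so every stationary family `D` carries an injective
selector `s` with `A[s,t]` finite. If `E(κ)` yields a stationary `S` on which only countably many
values `A[s,t]` occur, then for each infinite such value `X` there is an `i` for which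
`{α ∈ S | X ⊆ A(α, t i)}` is nonstationary; intersecting `S` with countably many clubs avoiding
these sets keeps it stationary and makes every `A[s,t]` finite. If instead `E(κ)` yields
stationary `D_i` on which `A[s,t]` is injective, selectors above arbitrarily large bounds have
finite values; as there are only countably many finite sets and `cf κ > ω`, one finite set
recurs cofinally, and two selectors with disjoint ranges then share a value.
-/

open Function Ordinal

section Clubs

variable {o : Ordinal}

theorem isSuccLimit_of_aleph0_lt_cof (hcof : ℵ₀ < o.cof) : Order.IsSuccLimit o :=
  one_lt_cof_iff.1 (one_lt_aleph0.trans hcof)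

theorem iSup_lt_of_countable {ι : Type*} [Countable ι] (hcof : ℵ₀ < o.cof) {f : ι → Ordinal}
    (hf : ∀ i, f i < o) : ⨆ i, f i < o :=
  lift_iSup_lt_of_lt_cof (by
    rw [← lift_cof]
    exact (lift_le_aleph0.2 mk_le_aleph0).trans_lt (aleph0_lt_lift.2 hcof)) hf

theorem exists_forall_lt_of_antitone {ι : Type*} [Countable ι] (hcof : ℵ₀ < o.cof)
    {Q : Ordinal → ι → Prop} (hQ : ∀ i, Antitone (Q · i)) (h : ∀ c < o, ∃ i, Q c i) :
    ∃ i, ∀ c < o, Q c i := by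
  by_contra! hbad
  choose b hb hnQ using hbad
  obtain ⟨i, hi⟩ := h _ (iSup_lt_of_countable hcof hb)
  exact hnQ i (hQ i (Ordinal.le_iSup b i) hi)

theorem clubIn_Ioo (hlim : Order.IsSuccLimit o) {b : Ordinal} (hb : b < o) :
    ClubIn o (Set.Ioo b o) := by
  refine ⟨fun x hx => hx.2, fun α hα => ?_, fun α hα h0 hacc => ?_⟩
  · refine ⟨Order.succ (max α b), ⟨?_, hlim.succ_lt (max_lt hα hb)⟩, ?_⟩
    · exact (le_max_right α b).trans_lt (Order.lt_succ _)
    · exact (le_max_left α b).trans_lt (Order.lt_succ _)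
  · obtain ⟨γ, hγ, -, hγα⟩ := hacc 0 h0
    exact ⟨hγ.1.trans hγα, hα⟩

theorem ClubIn.iInter {ι : Type*} [Countable ι] [Nonempty ι] (hcof : ℵ₀ < o.cof)
    {C : ι → Set Ordinal} (hC : ∀ i, ClubIn o (C i)) : ClubIn o (⋂ i, C i) := by
  refine ⟨(Set.iInter_subset C (Classical.arbitrary ι)).trans (hC _).1, fun α hα => ?_,
    fun α hα h0 hacc => Set.mem_iInter.2 fun i => (hC i).2.2 α hα h0 fun b hb => ?_⟩
  · choose! next hnext using fun i => (hC i).2.1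
    set F : Ordinal → Ordinal := fun b => ⨆ i, Order.succ (next i b)
    have hF : ∀ b < o, F b < o := fun b hb =>
      iSup_lt_of_countable hcof fun i =>
        (isSuccLimit_of_aleph0_lt_cof hcof).succ_lt ((hC i).1 (hnext i b hb).1)
    have hnextF : ∀ i b, next i b < F b := fun i b =>
      (Order.lt_succ _).trans_le (Ordinal.le_iSup (fun i => Order.succ (next i b)) i)
    -- below the least fixed point of `F` above `α`, every `C i` has elements between consecutive
    -- iterates of `F`
    have hσ : nfp F α < o := nfp_lt_ord hcof hF hα
    have hασ : α < nfp F α := (hnext (Classical.arbitrary ι) α hα).2.trans <|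
      (hnextF _ α).trans_le (iterate_le_nfp F α 1)
    refine ⟨nfp F α, Set.mem_iInter.2 fun i => (hC i).2.2 _ hσ (zero_le.trans_lt hασ)
      fun b hb => ?_, hασ⟩
    obtain ⟨n, hn⟩ := lt_nfp_iff.1 hb
    have hn_lt : F^[n] α < o := (iterate_le_nfp F α n).trans_lt hσ
    refine ⟨next i (F^[n] α), (hnext i _ hn_lt).1, hn.trans (hnext i _ hn_lt).2,
      (hnextF i _).trans_le ?_⟩
    simpa only [iterate_succ_apply'] using iterate_le_nfp F α (n + 1)
  · obtain ⟨γ, hγ, hbγ, hγα⟩ := hacc b hb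
    exact ⟨γ, Set.mem_iInter.1 hγ i, hbγ, hγα⟩

theorem ClubIn.inter (hcof : ℵ₀ < o.cof) {C D : Set Ordinal} (hC : ClubIn o C)
    (hD : ClubIn o D) : ClubIn o (C ∩ D) := by
  rw [Set.inter_eq_iInter]
  exact ClubIn.iInter hcof fun b => by cases b <;> assumption

theorem StationaryIn.inter_club (hcof : ℵ₀ < o.cof) {S C : Set Ordinal} (hS : StationaryIn o S)
    (hC : ClubIn o C) : StationaryIn o (S ∩ C) :=
  ⟨Set.inter_subset_left.trans hS.1, fun D hD => by
    simpa only [Set.inter_assoc] using hS.2 _ (hC.inter hcof hD)⟩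

theorem StationaryIn.inter_iInter {ι : Type*} [Countable ι] (hcof : ℵ₀ < o.cof) {S : Set Ordinal}
    (hS : StationaryIn o S) {C : ι → Set Ordinal} (hC : ∀ i, ClubIn o (C i)) :
    StationaryIn o (S ∩ ⋂ i, C i) := by
  cases isEmpty_or_nonempty ι
  · simpa using hS
  · exact hS.inter_club hcof (ClubIn.iInter hcof hC)

end Clubs

/-- The failure of alternative (2) of `C*` at `t`. -/
def HasFiniteSelection (o : Ordinal) (A : Ordinal → ℕ → Set ℕ) (t : List ℕ) : Prop :=
  ∀ D : Fin t.length → Set Ordinal, (∀ i, StationaryIn o (D i)) →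
    ∃ s, Injective s ∧ (∀ i, s i ∈ D i) ∧ (MatInt A t s).Finite

section Selection

variable {o : Ordinal} {A : Ordinal → ℕ → Set ℕ}

theorem HasFiniteSelection.exists_club_not_subset {t : List ℕ} (h : HasFiniteSelection o A t)
    {S : Set Ordinal} (hS : S ⊆ Set.Iio o) {X : Set ℕ} (hX : X.Infinite) :
    ∃ i, ∃ C, ClubIn o C ∧ ∀ α ∈ S ∩ C, ¬ X ⊆ A α (t.get i) := by
  by_contra! hall
  obtain ⟨s, -, hs, hfin⟩ := h (fun i => {α ∈ S | X ⊆ A α (t.get i)}) fun i =>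
    ⟨fun α hα => hS hα.1, fun C hC => by
      obtain ⟨α, ⟨hαS, hαC⟩, hXα⟩ := hall i C hC
      exact ⟨α, ⟨hαS, hXα⟩, hαC⟩⟩
  exact hX (hfin.subset (Set.subset_iInter fun i => (hs i).2))

theorem exists_stationary_finite_of_countable (hcof : ℵ₀ < o.cof) {T : Set (List ℕ)}
    (hT : ∀ t ∈ T, HasFiniteSelection o A t) {S : Set Ordinal} (hS : StationaryIn o S)
    (hcount : {X : Set ℕ | ∃ t ∈ T, ∃ s : Fin t.length → Ordinal,
      Injective s ∧ (∀ i, s i ∈ S) ∧ X = MatInt A t s}.Countable) :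
    ∃ S', StationaryIn o S' ∧ ∀ t ∈ T, ∀ s : Fin t.length → Ordinal, Injective s →
      (∀ i, s i ∈ S') → (MatInt A t s).Finite := by
  set 𝒳 := {X : Set ℕ | ∃ t ∈ T, ∃ s : Fin t.length → Ordinal,
    Injective s ∧ (∀ i, s i ∈ S) ∧ X = MatInt A t s}
  set P := {p : List ℕ × Set ℕ | p.1 ∈ T ∧ p.2 ∈ 𝒳 ∧ p.2.Infinite}
  have hP : P.Countable :=
    ((Set.to_countable T).prod hcount).mono fun _ hp => Set.mem_prod.2 ⟨hp.1, hp.2.1⟩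
  have := hP.to_subtype
  choose i C hC hCS using fun p : P => (hT _ p.2.1).exists_club_not_subset hS.1 p.2.2.2
  refine ⟨S ∩ ⋂ p, C p, hS.inter_iInter hcof hC, fun t ht s hs hsS => ?_⟩
  by_contra hinf
  let p : P := ⟨(t, MatInt A t s), ht, ⟨t, ht, s, hs, fun j => (hsS j).1, rfl⟩, hinf⟩
  exact hCS p (s (i p)) ⟨(hsS _).1, Set.mem_iInter.1 (hsS _).2 p⟩ (Set.iInter_subset _ _)

theorem HasFiniteSelection.exists_matInt_eq (hcof : ℵ₀ < o.cof) {t : List ℕ}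
    (h : HasFiniteSelection o A t) {D : Fin t.length → Set Ordinal}
    (hD : ∀ i, StationaryIn o (D i)) :
    ∃ s₀ s₁ : Fin t.length → Ordinal, Injective s₀ ∧ Injective s₁ ∧ (∀ i, s₀ i ∈ D i) ∧
      (∀ i, s₁ i ∈ D i) ∧ (∀ i, s₀ i ≠ s₁ i) ∧ MatInt A t s₀ = MatInt A t s₁ := by
  have hlim := isSuccLimit_of_aleph0_lt_cof hcof
  -- above every bound some value is finite, and there are only countably many finite sets
  obtain ⟨G, hG⟩ : ∃ G : Finset ℕ, ∀ c < o, ∃ s, Injective s ∧ (∀ i, s i ∈ D i) ∧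
      (∀ i, c < s i) ∧ MatInt A t s = G := by
    refine exists_forall_lt_of_antitone hcof
      (fun _ _ _ hc => by
        rintro ⟨s, hs, hsD, hcs, hsG⟩
        exact ⟨s, hs, hsD, fun i => hc.trans_lt (hcs i), hsG⟩)
      fun c hc => ?_
    obtain ⟨s, hs, hsD, hfin⟩ :=
      h (fun i => D i ∩ Set.Ioo c o) fun i => (hD i).inter_club hcof (clubIn_Ioo hlim hc)
    exact ⟨hfin.toFinset, s, hs, fun i => (hsD i).1, fun i => (hsD i).2.1, hfin.coe_toFinset.symm⟩
  obtain ⟨s₀, hs₀, hs₀D, -, hs₀G⟩ := hG 0 hlim.bot_lt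
  obtain ⟨s₁, hs₁, hs₁D, hlt, hs₁G⟩ := hG _ (iSup_lt_of_countable hcof fun i => (hD i).1 (hs₀D i))
  exact ⟨s₀, s₁, hs₀, hs₁, hs₀D, hs₁D, fun i => ((Ordinal.le_iSup s₀ i).trans_lt (hlt i)).ne,
    hs₀G.trans hs₁G.symm⟩

end Selection

/-- If κ is a regular uncountable cardinal and E(κ) holds, then C*(κ) holds. -/
theorem statement_2 (κ : Cardinal) (hreg : κ.IsRegular) (hunc : ℵ₀ < κ)
    (hE : PrincipleE κ) : PrincipleCstar κ := by
  intro T A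
  have hcof : ℵ₀ < κ.ord.cof := by rwa [hreg.cof_ord]
  by_cases hC2 : ∃ t ∈ T, ∃ D : Fin t.length → Set Ordinal,
      (∀ i, StationaryIn κ.ord (D i)) ∧
      ∀ s : Fin t.length → Ordinal, Injective s → (∀ i, s i ∈ D i) → (MatInt A t s).Infinite
  · exact Or.inr hC2
  have hT : ∀ t ∈ T, HasFiniteSelection κ.ord A t := by
    push Not at hC2
    exact hC2
  refine Or.inl ?_
  rcases hE T A with ⟨S, hS, hcount⟩ | ⟨t, ht, D, hD, hdist⟩
  · exact exists_stationary_finite_of_countable hcof hT hS hcount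
  · obtain ⟨s₀, s₁, hs₀, hs₁, hs₀D, hs₁D, hne, heq⟩ := (hT t ht).exists_matInt_eq hcof hD
    exact absurd heq (hdist s₀ s₁ hs₀ hs₁ hs₀D hs₁D hne)
end

section
/- Let κ be a regular uncountable cardinal. If principle E⁻(κ) holds, then principle C*⁻(κ) holds. -/
open Cardinal

/-- Principle E⁻(κ). -/
def PrincipleEminus (κ : Cardinal) : Prop :=
  ∀ (T : Set (List ℕ)) (A : Ordinal → ℕ → Set ℕ),
    (∃ S : Set Ordinal, CofinalIn κ.ord S ∧
      {X : Set ℕ | ∃ t ∈ T, ∃ s : Fin (List.length t) → Ordinal,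
        Function.Injective s ∧ (∀ i, s i ∈ S) ∧ X = MatInt A t s}.Countable) ∨
    (∃ t ∈ T, ∃ D : Fin t.length → Set Ordinal,
      (∀ i, CofinalIn κ.ord (D i)) ∧
      ∀ s₀ s₁ : Fin t.length → Ordinal, Function.Injective s₀ → Function.Injective s₁ →
        (∀ i, s₀ i ∈ D i) → (∀ i, s₁ i ∈ D i) → (∀ i, s₀ i ≠ s₁ i) →
          MatInt A t s₀ ≠ MatInt A t s₁)

/-- Principle C*⁻(κ). -/
def PrincipleCstarMinus (κ : Cardinal) : Prop :=
  ∀ (T : Set (List ℕ)) (A : Ordinal → ℕ → Set ℕ),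
    (∃ S : Set Ordinal, CofinalIn κ.ord S ∧
      ∀ t ∈ T, ∀ s : Fin t.length → Ordinal, Function.Injective s →
        (∀ i, s i ∈ S) → (MatInt A t s).Finite) ∨
    (∃ t ∈ T, ∃ D : Fin t.length → Set Ordinal,
      (∀ i, CofinalIn κ.ord (D i)) ∧
      ∀ s : Fin t.length → Ordinal, Function.Injective s →
        (∀ i, s i ∈ D i) → (MatInt A t s).Infinite)

/-!
Split on whether some `t ∈ T` and infinite `X` satisfy `X ⊆ A(α, t i)` for cofinally many `α`,
in every coordinate `i`; those cofinal sets then witness alternative (2) of C*⁻(κ).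
Otherwise every infinite `X` is excluded, in some coordinate, above a bound below `κ`.
Under alternative (1) of E⁻(κ) only countably many `X` occur, regularity gives a common bound `β`,
and `S ∩ (β, κ)` witnesses alternative (1) of C*⁻(κ). Under alternative (2), if no tail of the
`D i` has only infinite values, choose for each `γ` some `s_γ > γ` with `A[s_γ, t]` finite. There
are only countably many finite sets, so two of these, with `s_γ₀ < s_γ₁` pointwise, take the same
value, contradicting E⁻(κ).
-/

universe u v

theorem CofinalIn.inter_Ioi {o γ : Ordinal} {S : Set Ordinal} (hS : CofinalIn o S) (hγ : γ < o) :
    CofinalIn o (S ∩ Set.Ioi γ) := by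
  refine ⟨fun α hα => hS.1 hα.1, fun α hα => ?_⟩
  obtain ⟨β, hβS, hβ⟩ := hS.2 (max α γ) (max_lt hα hγ)
  exact ⟨β, ⟨hβS, (le_max_right α γ).trans_lt hβ⟩, (le_max_left α γ).trans_lt hβ⟩

theorem exists_bound_of_not_cofinalIn {o : Ordinal} {p : Ordinal → Prop}
    (h : ¬CofinalIn o {α | α < o ∧ p α}) : ∃ β < o, ∀ α, β < α → α < o → ¬p α := by
  contrapose! h
  exact ⟨fun α hα => hα.1, fun β hβ => by
    obtain ⟨α, hβα, hαo, hα⟩ := h β hβ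
    exact ⟨α, ⟨hαo, hα⟩, hβα⟩⟩

section

variable {κ : Cardinal.{u}}

theorem exists_lt_ord_forall_lt_of_countable (hreg : κ.IsRegular) (hunc : ℵ₀ < κ)
    {ι : Type v} [Countable ι] (f : ι → Ordinal.{u}) (hf : ∀ i, f i < κ.ord) :
    ∃ β < κ.ord, ∀ i, f i < β := by
  refine ⟨⨆ i, (f i + 1), ?_, fun i => ?_⟩
  · apply Ordinal.lift_iSup_add_one_lt_of_lt_cof _ hf
    rw [← Ordinal.lift_cof, hreg.cof_ord]
    exact (Cardinal.lift_le.2 (Cardinal.mk_le_aleph0 (α := ι))).trans_lt (by simpa using hunc)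
  · exact (Order.lt_add_one_iff.2 le_rfl).trans_le (Ordinal.le_iSup (fun i => f i + 1) i)

theorem exists_lt_ord_forall_lt_of_countable_set (hreg : κ.IsRegular) (hunc : ℵ₀ < κ)
    {α : Type v} {C : Set α} (hC : C.Countable)
    (f : ∀ x ∈ C, Ordinal.{u}) (hf : ∀ x hx, f x hx < κ.ord) :
    ∃ β < κ.ord, ∀ x hx, f x hx < β := by
  have := hC.to_subtype
  obtain ⟨β, hβ, hfβ⟩ :=
    exists_lt_ord_forall_lt_of_countable hreg hunc (fun x : C => f x x.2) fun x => hf x x.2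
  exact ⟨β, hβ, fun x hx => hfβ ⟨x, hx⟩⟩

theorem exists_cofinal_fiber_of_countable (hreg : κ.IsRegular) (hunc : ℵ₀ < κ)
    {α : Type v} {C : Set α} (hC : C.Countable) (f : Ordinal.{u} → α)
    (hf : ∀ γ < κ.ord, f γ ∈ C) :
    ∃ x, ∀ γ < κ.ord, ∃ δ, γ < δ ∧ δ < κ.ord ∧ f δ = x := by
  by_contra! h
  choose b hb hbf using fun x (_ : x ∈ C) => h x
  obtain ⟨β, hβ, hbβ⟩ := exists_lt_ord_forall_lt_of_countable_set hreg hunc hC b hb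
  exact hbf _ (hf β hβ) β (hbβ _ _) hβ rfl

theorem exists_cofinalIn_forall_matInt_finite (hreg : κ.IsRegular) (hunc : ℵ₀ < κ)
    {T : Set (List ℕ)} {A : Ordinal → ℕ → Set ℕ} {S : Set Ordinal} (hS : CofinalIn κ.ord S)
    (hcount : {X : Set ℕ | ∃ t ∈ T, ∃ s : Fin (List.length t) → Ordinal,
      Function.Injective s ∧ (∀ i, s i ∈ S) ∧ X = MatInt A t s}.Countable)
    (hbdd : ∀ t ∈ T, ∀ X : Set ℕ, X.Infinite →
      ∃ i, ¬CofinalIn κ.ord {α | α < κ.ord ∧ X ⊆ A α (t.get i)}) :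
    ∃ S', CofinalIn κ.ord S' ∧ ∀ t ∈ T, ∀ s : Fin t.length → Ordinal, Function.Injective s →
      (∀ i, s i ∈ S') → (MatInt A t s).Finite := by
  set F := {X : Set ℕ | ∃ t ∈ T, ∃ s : Fin (List.length t) → Ordinal,
      Function.Injective s ∧ (∀ i, s i ∈ S) ∧ X = MatInt A t s}
  set P := {p : List ℕ × Set ℕ | p.1 ∈ T ∧ p.2 ∈ F ∧ p.2.Infinite}
  have hP : P.Countable := ((Set.to_countable T).prod hcount).mono fun p hp =>
    Set.mem_prod.2 ⟨hp.1, hp.2.1⟩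
  have hbound : ∀ p ∈ P, ∃ β < κ.ord, ∃ i : Fin p.1.length,
      ∀ α, β < α → α < κ.ord → ¬p.2 ⊆ A α (p.1.get i) := fun p hp => by
    obtain ⟨i, hi⟩ := hbdd p.1 hp.1 p.2 hp.2.2
    obtain ⟨β, hβ, hβi⟩ := exists_bound_of_not_cofinalIn hi
    exact ⟨β, hβ, i, hβi⟩
  choose b hb i hbi using hbound
  obtain ⟨β, hβ, hbβ⟩ := exists_lt_ord_forall_lt_of_countable_set hreg hunc hP b hb
  refine ⟨S ∩ Set.Ioi β, hS.inter_Ioi hβ, fun t ht s hs hsS => ?_⟩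
  by_contra hinf
  have hp : (t, MatInt A t s) ∈ P := ⟨ht, ⟨t, ht, s, hs, fun j => (hsS j).1, rfl⟩, hinf⟩
  set j := i _ hp
  exact hbi _ hp (s j) ((hbβ _ hp).trans (hsS j).2) (hS.1 (hsS j).1) (Set.iInter_subset _ j)

theorem exists_forall_matInt_infinite_of_ne (hreg : κ.IsRegular) (hunc : ℵ₀ < κ)
    {A : Ordinal → ℕ → Set ℕ} {t : List ℕ} {D : Fin t.length → Set Ordinal}
    (hD : ∀ i, CofinalIn κ.ord (D i))
    (hne : ∀ s₀ s₁ : Fin t.length → Ordinal, Function.Injective s₀ → Function.Injective s₁ →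
      (∀ i, s₀ i ∈ D i) → (∀ i, s₁ i ∈ D i) → (∀ i, s₀ i ≠ s₁ i) →
        MatInt A t s₀ ≠ MatInt A t s₁) :
    ∃ γ < κ.ord, ∀ s : Fin t.length → Ordinal, Function.Injective s →
      (∀ i, s i ∈ D i ∩ Set.Ioi γ) → (MatInt A t s).Infinite := by
  by_contra! h
  have hsel : ∀ γ, ∃ s : Fin t.length → Ordinal, γ < κ.ord →
      Function.Injective s ∧ (∀ i, s i ∈ D i ∩ Set.Ioi γ) ∧ (MatInt A t s).Finite := fun γ => by
    by_cases hγ : γ < κ.ord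
    · obtain ⟨s, hs⟩ := h γ hγ
      exact ⟨s, fun _ => hs⟩
    · exact ⟨0, fun h => absurd h hγ⟩
  choose s hs using hsel
  obtain ⟨X, hX⟩ := exists_cofinal_fiber_of_countable hreg hunc Set.Countable.ofPred_finite
    (fun γ => MatInt A t (s γ)) fun γ hγ => (hs γ hγ).2.2
  obtain ⟨δ₀, -, hδ₀, hX₀⟩ := hX 0 (Cardinal.ord_pos.2 (Cardinal.aleph0_pos.trans hunc))
  obtain ⟨β, hβ, hsβ⟩ := exists_lt_ord_forall_lt_of_countable hreg hunc (s δ₀)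
    fun i => (hD i).1 ((hs δ₀ hδ₀).2.1 i).1
  obtain ⟨δ₁, hβδ₁, hδ₁, hX₁⟩ := hX β hβ
  refine hne (s δ₀) (s δ₁) (hs δ₀ hδ₀).1 (hs δ₁ hδ₁).1 (fun i => ((hs δ₀ hδ₀).2.1 i).1)
    (fun i => ((hs δ₁ hδ₁).2.1 i).1) (fun i => ?_) (hX₀.trans hX₁.symm)
  exact ((hsβ i).trans (hβδ₁.trans ((hs δ₁ hδ₁).2.1 i).2)).ne

end

/-- If κ is a regular uncountable cardinal and E⁻(κ) holds, then C*⁻(κ) holds. -/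
theorem statement_3 (κ : Cardinal) (hreg : κ.IsRegular) (hunc : ℵ₀ < κ)
    (hE : PrincipleEminus κ) : PrincipleCstarMinus κ := by
  intro T A
  by_cases hpattern : ∃ t ∈ T, ∃ X : Set ℕ, X.Infinite ∧
      ∀ i, CofinalIn κ.ord {α | α < κ.ord ∧ X ⊆ A α (t.get i)}
  · obtain ⟨t, ht, X, hX, hcof⟩ := hpattern
    exact Or.inr ⟨t, ht, _, hcof, fun s _ hs =>
      hX.mono (Set.subset_iInter fun i => (hs i).2)⟩
  push Not at hpattern
  rcases hE T A with ⟨S, hS, hcount⟩ | ⟨t, ht, D, hD, hne⟩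
  · exact Or.inl (exists_cofinalIn_forall_matInt_finite hreg hunc hS hcount hpattern)
  · obtain ⟨γ, hγ, hinf⟩ := exists_forall_matInt_infinite_of_ne hreg hunc hD hne
    exact Or.inr ⟨t, ht, fun i => D i ∩ Set.Ioi γ, fun i => (hD i).inter_Ioi hγ, hinf⟩
end

section
/- There exists a function f : [ω₁]² → 2 on the two-element subsets of ω₁ such that for every n ∈ ℕ and every choice of uncountable sets I_0, …, I_{n−1} ⊆ ω₁ there are pairwise distinct γ_i ∈ I_i (i < n) with f({γ_i, γ_j}) = 0 for all i < j < n, and pairwise distinct δ_i ∈ I_i (i < n) with f({δ_i, δ_j}) = 1 for all i < j < n. -/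
open Cardinal

section Aux

/-- Condensation points of a set of reals -/
private def condPts (A : Set ℝ) : Set ℝ :=
  {x : ℝ | ∀ ε > 0, ¬ (A ∩ Metric.ball x ε).Countable}

private lemma uncount_condPts {A : Set ℝ} (hA : ¬ A.Countable) :
    ¬ (condPts A).Countable := by
  obtain ⟨b, hbc, -, hb⟩ := TopologicalSpace.exists_countable_basis ℝ
  intro hC
  apply hA
  have h1 : A ⊆ (⋃ s ∈ {s ∈ b | (A ∩ s).Countable}, (A ∩ s)) ∪ condPts A := by
    intro x hx
    by_cases hxc : x ∈ condPts A
    · exact Or.inr hxc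
    · simp only [condPts, Set.mem_setOf_eq, not_forall] at hxc
      obtain ⟨ε, hε, hcnt⟩ := hxc
      rw [not_not] at hcnt
      obtain ⟨t, htb, hxt, hts⟩ := hb.mem_nhds_iff.mp (Metric.ball_mem_nhds x hε)
      refine Or.inl ?_
      refine Set.mem_biUnion ⟨htb, ?_⟩ ⟨hx, hxt⟩
      exact hcnt.mono (Set.inter_subset_inter_right _ hts)
  refine (Set.Countable.union ?_ hC).mono h1
  exact Set.Countable.biUnion (hbc.mono (fun s hs => hs.1)) (fun s hs => hs.2)

/-- Pick distinct points from finitely many uncountable sets of reals. -/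
private lemma pick_distinct : ∀ (n : ℕ) (C : Fin n → Set ℝ),
    (∀ i, ¬ (C i).Countable) →
    ∃ c : Fin n → ℝ, Function.Injective c ∧ ∀ i, c i ∈ C i := by
  intro n
  induction n with
  | zero => exact fun C _ => ⟨fun i => i.elim0, fun i => i.elim0, fun i => i.elim0⟩
  | succ n ih =>
    intro C hC
    obtain ⟨c, hcinj, hc⟩ := ih (fun i => C i.castSucc) (fun i => hC i.castSucc)
    have hne : (C (Fin.last n) \ Set.range c).Nonempty := by
      rcases Set.eq_empty_or_nonempty (C (Fin.last n) \ Set.range c) with h | h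
      · exfalso
        apply hC (Fin.last n)
        have : C (Fin.last n) ⊆ Set.range c := by
          intro x hx
          by_contra hxr
          exact Set.eq_empty_iff_forall_notMem.mp h x ⟨hx, hxr⟩
        exact ((Set.finite_range c).countable).mono this
      · exact h
    obtain ⟨x, hxC, hxr⟩ := hne
    refine ⟨Fin.snoc c x, ?_, ?_⟩
    · intro i j hij
      induction i using Fin.lastCases with
      | last =>
        induction j using Fin.lastCases with
        | last => rfl
        | cast j =>
          exfalso; apply hxr
          rw [Fin.snoc_last, Fin.snoc_castSucc] at hij
          exact ⟨j, hij.symm⟩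
      | cast i =>
        induction j using Fin.lastCases with
        | last =>
          exfalso; apply hxr
          rw [Fin.snoc_last, Fin.snoc_castSucc] at hij
          exact ⟨i, hij⟩
        | cast j =>
          rw [Fin.snoc_castSucc, Fin.snoc_castSucc] at hij
          exact congrArg Fin.castSucc (hcinj hij)
    · intro i
      induction i using Fin.lastCases with
      | last => rw [Fin.snoc_last]; exact hxC
      | cast i => rw [Fin.snoc_castSucc]; exact hc i

private lemma countable_Iio_of_lt {o : Ordinal.{0}} (ho : o < (aleph 1).ord) :
    (Set.Iio o).Countable := by
  rw [Cardinal.countable_iff_lt_aleph_one, Ordinal.mk_Iio_ordinal]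
  have h1 : o.card < aleph 1 := Cardinal.lt_ord.mp ho
  calc Cardinal.lift.{1} o.card < Cardinal.lift.{1} (aleph 1) := Cardinal.lift_lt.mpr h1
    _ = aleph 1 := by rw [Cardinal.lift_aleph, Ordinal.lift_one]

private lemma unbounded_of_uncountable {S : Set Ordinal.{0}}
    (hsub : S ⊆ Set.Iio (aleph 1).ord) (hS : ¬ S.Countable)
    {b : Ordinal.{0}} (hb : b < (aleph 1).ord) : ∃ x ∈ S, b < x := by
  by_contra hcon
  push_neg at hcon
  apply hS
  have h1 : S ⊆ Set.Iio (b + 1) := by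
    intro x hx
    exact Order.lt_succ_iff.mpr (hcon x hx) |>.trans_eq rfl
  have h2 : b + 1 < (aleph 1).ord :=
    (Cardinal.isSuccLimit_ord (Cardinal.aleph0_le_aleph 1)).succ_lt hb
  exact (countable_Iio_of_lt h2).mono h1

/-- Greedily pick a strictly increasing transversal from uncountable sets of
countable ordinals. -/
private lemma greedy : ∀ (n : ℕ) (S : Fin n → Set Ordinal.{0}),
    (∀ i, S i ⊆ Set.Iio (aleph 1).ord ∧ ¬ (S i).Countable) →
    ∃ t : Fin n → Ordinal.{0}, StrictMono t ∧ ∀ i, t i ∈ S i := by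
  intro n
  induction n with
  | zero =>
    exact fun S _ => ⟨fun i => i.elim0, fun i => i.elim0, fun i => i.elim0⟩
  | succ n ih =>
    intro S hS
    obtain ⟨t, htm, ht⟩ := ih (fun i => S i.castSucc) (fun i => hS i.castSucc)
    have hbot : (0 : Ordinal.{0}) < (aleph 1).ord :=
      (Cardinal.isSuccLimit_ord (Cardinal.aleph0_le_aleph 1)).pos
    have hb : Finset.univ.sup t < (aleph 1).ord := by
      rw [Finset.sup_lt_iff hbot]
      exact fun i _ => (hS i.castSucc).1 (ht i)
    obtain ⟨x, hxS, hxb⟩ :=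
      unbounded_of_uncountable (hS (Fin.last n)).1 (hS (Fin.last n)).2 hb
    refine ⟨Fin.snoc t x, ?_, ?_⟩
    · intro i j hij
      induction j using Fin.lastCases with
      | last =>
        induction i using Fin.lastCases with
        | last => exact absurd hij (lt_irrefl _)
        | cast i =>
          rw [Fin.snoc_last, Fin.snoc_castSucc]
          exact lt_of_le_of_lt (Finset.le_sup (Finset.mem_univ i)) hxb
      | cast j =>
        induction i using Fin.lastCases with
        | last => exact absurd hij (not_lt.mpr (Fin.castSucc_lt_last j).le)
        | cast i =>
          rw [Fin.snoc_castSucc, Fin.snoc_castSucc]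
          exact htm (Fin.castSucc_lt_castSucc_iff.mp hij)
    · intro i
      induction i using Fin.lastCases with
      | last => rw [Fin.snoc_last]; exact hxS
      | cast i => rw [Fin.snoc_castSucc]; exact ht i

private lemma exists_eps {n : ℕ} (c : Fin n → ℝ) (hc : Function.Injective c) :
    ∃ ε : ℝ, 0 < ε ∧ ∀ i j, i ≠ j → 2 * ε ≤ dist (c i) (c j) := by
  classical
  set s : Finset (Fin n × Fin n) :=
    Finset.univ.filter (fun p : Fin n × Fin n => p.1 ≠ p.2) with hs
  by_cases hne : s.Nonempty
  · set d := s.inf' hne (fun p => dist (c p.1) (c p.2)) with hd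
    have hdpos : 0 < d := by
      rw [hd, Finset.lt_inf'_iff]
      intro p hp
      have : p.1 ≠ p.2 := (Finset.mem_filter.mp hp).2
      exact dist_pos.mpr (fun h => this (hc h))
    refine ⟨d / 2, by linarith, fun i j hij => ?_⟩
    have hmem : (i, j) ∈ s := Finset.mem_filter.mpr ⟨Finset.mem_univ _, hij⟩
    have := Finset.inf'_le (fun p => dist (c p.1) (c p.2)) hmem
    calc 2 * (d / 2) = d := by ring
      _ ≤ dist (c i) (c j) := this
  · refine ⟨1, one_pos, fun i j hij => ?_⟩
    exact absurd (Finset.mem_filter.mpr ⟨Finset.mem_univ (i, j), hij⟩)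
      (fun h => hne ⟨_, h⟩)

private lemma lt_of_near {a b x y ε : ℝ} (hx : dist x a < ε) (hy : dist y b < ε)
    (h2 : 2 * ε ≤ dist a b) (hab : a < b) : x < y := by
  rw [Real.dist_eq, abs_sub_lt_iff] at hx hy
  have : dist a b = b - a := by
    rw [Real.dist_eq, abs_sub_comm, abs_of_pos (by linarith)]
  linarith [hx.1, hx.2, hy.1, hy.2, this ▸ h2]

private lemma lt_iff_of_near {a b x y ε : ℝ} (hε : 0 < ε) (hx : dist x a < ε)
    (hy : dist y b < ε) (h2 : 2 * ε ≤ dist a b) : (x < y ↔ a < b) := by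
  rcases lt_trichotomy a b with h | h | h
  · exact ⟨fun _ => h, fun _ => lt_of_near hx hy h2 h⟩
  · exfalso
    rw [h] at h2
    simp at h2
    linarith
  · have := lt_of_near hy hx (by rwa [dist_comm] at h2) h
    constructor
    · intro hxy; exact absurd hxy (not_lt.mpr this.le)
    · intro hab; exact absurd hab (not_lt.mpr h.le)

end Aux

/-- There is a 2-colouring `f` of the pairs from `ω₁` (represented as a symmetric
function of two variables) such that for every `n` and all uncountable
`I_0, …, I_{n-1} ⊆ ω₁` there are pairwise distinct `γ_i ∈ I_i` with
`f(γ_i, γ_j) = 0` for all `i ≠ j`, and pairwise distinct `δ_i ∈ I_i` with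
`f(δ_i, δ_j) = 1` for all `i ≠ j`. -/
theorem statement_5 :
    ∃ f : Ordinal.{0} → Ordinal.{0} → Fin 2,
      (∀ α β, f α β = f β α) ∧
      ∀ (n : ℕ) (I : Fin n → Set Ordinal.{0}),
        (∀ i, I i ⊆ Set.Iio (Cardinal.aleph 1).ord ∧ ¬ (I i).Countable) →
        (∃ γ : Fin n → Ordinal.{0}, Function.Injective γ ∧ (∀ i, γ i ∈ I i) ∧
          ∀ i j : Fin n, i ≠ j → f (γ i) (γ j) = 0) ∧
        (∃ δ : Fin n → Ordinal.{0}, Function.Injective δ ∧ (∀ i, δ i ∈ I i) ∧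
          ∀ i j : Fin n, i ≠ j → f (δ i) (δ j) = 1) := by
  classical
  -- an injection of the ordinals below ω₁ into ℝ
  have hcard : #(Set.Iio (aleph 1).ord : Set Ordinal.{0}) ≤ #(ULift.{1} ℝ) := by
    rw [Ordinal.mk_Iio_ordinal, Cardinal.card_ord, Cardinal.mk_uLift, Cardinal.mk_real]
    exact Cardinal.lift_le.mpr Cardinal.aleph_one_le_continuum
  obtain ⟨e⟩ := (Cardinal.le_def _ _).mp hcard
  set h : Ordinal.{0} → ℝ :=
    fun α => if hα : α < (aleph 1).ord then (e ⟨α, hα⟩).down else 0 with hh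
  have hinj : ∀ {α β : Ordinal.{0}}, α < (aleph 1).ord → β < (aleph 1).ord →
      h α = h β → α = β := by
    intro α β hα hβ hab
    rw [hh] at hab
    simp only [dif_pos hα, dif_pos hβ] at hab
    have := e.injective (ULift.ext _ _ hab)
    exact congrArg Subtype.val this
  refine ⟨fun α β => if (α < β ↔ h α < h β) ∧ (β < α ↔ h β < h α) then 0 else 1,
    fun α β => if_congr and_comm rfl rfl, ?_⟩
  intro n I hI
  -- condensation points of the images
  have hAunc : ∀ i, ¬ (h '' I i).Countable := by
    intro i hcnt
    apply (hI i).2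
    rw [Set.countable_iff_exists_injective] at hcnt ⊢
    obtain ⟨g, hg⟩ := hcnt
    refine ⟨fun x => g ⟨h x, ⟨x, x.2, rfl⟩⟩, fun x y hxy => ?_⟩
    have := hg hxy
    have hxv : h x.1 = h y.1 := congrArg Subtype.val this
    exact Subtype.ext (hinj ((hI i).1 x.2) ((hI i).1 y.2) hxv)
  obtain ⟨c, hcinj, hc⟩ := pick_distinct n (fun i => condPts (h '' I i))
    (fun i => uncount_condPts (hAunc i))
  obtain ⟨ε, hεpos, hε⟩ := exists_eps c hcinj
  -- the trimmed sets
  set S : Fin n → Set Ordinal.{0} :=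
    fun i => I i ∩ h ⁻¹' (Metric.ball (c i) ε) with hSdef
  have hSsub : ∀ i, S i ⊆ I i := fun i => Set.inter_subset_left
  have hSunc : ∀ i, S i ⊆ Set.Iio (aleph 1).ord ∧ ¬ (S i).Countable := by
    intro i
    refine ⟨fun x hx => (hI i).1 (hSsub i hx), fun hcnt => ?_⟩
    have himg : h '' I i ∩ Metric.ball (c i) ε = h '' S i := by
      rw [hSdef]
      exact (Set.image_inter_preimage h (I i) (Metric.ball (c i) ε)).symm
    exact (hc i) ε hεpos (himg ▸ hcnt.image h)
  have hdist : ∀ i, ∀ x ∈ S i, dist (h x) (c i) < ε := by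
    intro i x hx
    exact Metric.mem_ball.mp hx.2
  -- sort the condensation points
  set σ : Equiv.Perm (Fin n) := Tuple.sort c with hσ
  have hcm : StrictMono (c ∘ σ) :=
    (Tuple.monotone_sort c).strictMono_of_injective (hcinj.comp σ.injective)
  have hkey : ∀ i j : Fin n, i ≠ j → (c i < c j ↔ σ.symm i < σ.symm j) := by
    intro i j hij
    have h1 : c i = (c ∘ σ) (σ.symm i) := by simp
    have h2 : c j = (c ∘ σ) (σ.symm j) := by simp
    rw [h1, h2, hcm.lt_iff_lt]
  constructor
  · -- colour 0
    obtain ⟨t, htm, ht⟩ := greedy n (fun k => S (σ k)) (fun k => hSunc (σ k))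
    refine ⟨fun i => t (σ.symm i), fun i j hij => σ.symm.injective (htm.injective hij),
      fun i => hSsub i (by simpa using ht (σ.symm i)), fun i j hij => ?_⟩
    have hmemi : ∀ i, t (σ.symm i) ∈ S i := fun i => by simpa using ht (σ.symm i)
    have hord : t (σ.symm i) < t (σ.symm j) ↔ σ.symm i < σ.symm j := htm.lt_iff_lt
    have hreal : h (t (σ.symm i)) < h (t (σ.symm j)) ↔ c i < c j :=
      lt_iff_of_near hεpos (hdist i _ (hmemi i)) (hdist j _ (hmemi j)) (hε i j hij)
    have hcond : (t (σ.symm i) < t (σ.symm j) ↔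
        h (t (σ.symm i)) < h (t (σ.symm j))) ∧
        (t (σ.symm j) < t (σ.symm i) ↔ h (t (σ.symm j)) < h (t (σ.symm i))) := by
      constructor
      · rw [hord, hreal, hkey i j hij]
      · have hreal' : h (t (σ.symm j)) < h (t (σ.symm i)) ↔ c j < c i :=
          lt_iff_of_near hεpos (hdist j _ (hmemi j)) (hdist i _ (hmemi i))
            (hε j i (Ne.symm hij))
        rw [htm.lt_iff_lt, hreal', hkey j i (Ne.symm hij)]
    exact if_pos hcond
  · -- colour 1
    obtain ⟨t, htm, ht⟩ := greedy n (fun k => S (σ k.rev)) (fun k => hSunc (σ k.rev))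
    have hmemi : ∀ i, t (σ.symm i).rev ∈ S i := by
      intro i
      have := ht (σ.symm i).rev
      simpa [Fin.rev_rev] using this
    refine ⟨fun i => t (σ.symm i).rev,
      fun i j hij => σ.symm.injective (Fin.rev_injective (htm.injective hij)),
      fun i => hSsub i (hmemi i), fun i j hij => ?_⟩
    have hne : t (σ.symm i).rev ≠ t (σ.symm j).rev := by
      intro hcon
      exact hij (σ.symm.injective (Fin.rev_injective (htm.injective hcon)))
    have hord : t (σ.symm i).rev < t (σ.symm j).rev ↔ σ.symm j < σ.symm i := by
      rw [htm.lt_iff_lt, Fin.rev_lt_rev]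
    have hreal : h (t (σ.symm i).rev) < h (t (σ.symm j).rev) ↔ c i < c j :=
      lt_iff_of_near hεpos (hdist i _ (hmemi i)) (hdist j _ (hmemi j)) (hε i j hij)
    refine if_neg (fun hcond => ?_)
    rcases lt_trichotomy (t (σ.symm i).rev) (t (σ.symm j).rev) with hlt | heq | hgt
    · have h1 : c i < c j := hreal.mp (hcond.1.mp hlt)
      have h2 : σ.symm j < σ.symm i := hord.mp hlt
      have h3 : σ.symm i < σ.symm j := (hkey i j hij).mp h1
      exact absurd (h2.trans h3) (lt_irrefl _)
    · exact hne heq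
    · have h1 : c j < c i := by
        have hreal' : h (t (σ.symm j).rev) < h (t (σ.symm i).rev) ↔ c j < c i :=
          lt_iff_of_near hεpos (hdist j _ (hmemi j)) (hdist i _ (hmemi i))
            (hε j i (Ne.symm hij))
        exact hreal'.mp (hcond.2.mp hgt)
      have h2 : σ.symm i < σ.symm j := Fin.rev_lt_rev.mp (htm.lt_iff_lt.mp hgt)
      have h3 : σ.symm j < σ.symm i := (hkey j i (Ne.symm hij)).mp h1
      exact absurd (h2.trans h3) (lt_irrefl _)
end

section
/- Let 𝓘 be a collection of nonempty finite subsets of ω₁ that is downwards closed, i.e., every nonempty subset of an element of 𝓘 belongs to 𝓘. Then there is a family {A_α : α < ω₁} of subsets of ℕ such that for every nonempty finite set I ⊆ ω₁: the intersection ⋂_{α ∈ I} A_α is infinite if and only if I ∈ 𝓘. -/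
/-!
The sets `A α` are chosen by transfinite recursion, keeping the invariant `IsRealizedOn`: below
the current stage, every nonempty `I ∉ 𝓘` has finite intersection, and every Boolean combination
`⋂_{β ∈ I} A β \ ⋃_{γ ∈ F} A γ` with `I ∈ 𝓘 ∪ {∅}` and `F` disjoint from `I` is infinite. The
stronger second clause is what makes the successor step possible. At a stage `α` with countably
many predecessors, the new set `S = A α` faces countably many requirements (`IsAdjoinable`): meet
infinitely the combinations with `insert α I ∈ 𝓘`, miss infinitely much of the combinations with
`I ∈ 𝓘 ∪ {∅}`, and meet finitely the intersections over `J ∈ 𝓘 ∪ {∅}` with `insert α J ∉ 𝓘`. By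
downward closure each such `J` has a point outside each such `I`, so adding these points to `F`
shows that a requirement of the first kind stays infinite after removing finitely many sets of
the third kind; a diagonal construction of length `ω` then meets all requirements.
-/

open Cardinal Set Function

theorem Set.Countable.setOf_finset_subset {α : Type*} {s : Set α} (hs : s.Countable) :
    {I : Finset α | ↑I ⊆ s}.Countable :=
  ((countable_ofPred_finite_subset hs).preimage Finset.coe_injective).mono
    fun I hI => And.intro I.finite_toSet hI

theorem exists_set_infinite_inter_infinite_diff_finite_inter {ι κ μ : Type*}
    [Countable ι] [Countable κ] [Countable μ]
    (P : ι → Set ℕ) (R : κ → Set ℕ) (N : μ → Set ℕ)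
    (hP : ∀ i (K : Finset μ), (P i \ ⋃ k ∈ K, N k).Infinite) (hR : ∀ j, (R j).Infinite) :
    ∃ S : Set ℕ, (∀ i, (S ∩ P i).Infinite) ∧ (∀ j, (R j \ S).Infinite) ∧
      ∀ k, (S ∩ N k).Finite := by
  rcases isEmpty_or_nonempty ι with hι | hι
  · exact ⟨∅, fun i => isEmptyElim i, by simpa using hR, by simp⟩
  obtain ⟨p, hp⟩ := exists_surjective_nat ι
  obtain ⟨r, hr⟩ := exists_surjective_nat (Option κ)
  obtain ⟨c, hc⟩ := Countable.exists_injective_nat μ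
  -- `early m` lists the sets `N k` that the `m`-th point of `S` must avoid
  let early (m : ℕ) : Finset μ := ((finite_Iio m).preimage hc.injOn).toFinset
  -- stage `m` serves the requirements of index `m.unpair.1`, so each of them infinitely often
  let T : ℕ ⊕ ℕ → Set ℕ := Sum.elim (fun m => P (p m.unpair.1) \ ⋃ k ∈ early m, N k)
    (fun m => (r m.unpair.1).elim univ R)
  have hT : ∀ t, (T t).Infinite := by
    rintro (m | m)
    · exact hP _ _
    · rcases h : r m.unpair.1 with _ | j <;> simp [T, h, hR, infinite_univ]
  let e := Equiv.natSumNatEquivNat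
  obtain ⟨z, hz_mono, hzT⟩ := Filter.extraction_forall_of_frequently
    (P := fun n k => k ∈ T (e.symm n)) fun n => Nat.frequently_atTop_iff_infinite.2 (hT _)
  have hw_inj : Injective (z ∘ e) := hz_mono.injective.comp e.injective
  have hwT : ∀ t, z (e t) ∈ T t := fun t => by simpa using hzT (e t)
  have hpair (a : ℕ) : Injective (Nat.pair a) :=
    Nat.pairEquiv.injective.comp (Prod.mk_right_injective a)
  refine ⟨range (z ∘ e ∘ Sum.inl), fun i => ?_, fun j => ?_, fun k => ?_⟩
  · obtain ⟨a, rfl⟩ := hp i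
    refine infinite_of_injective_forall_mem (f := fun b => z (e (.inl (Nat.pair a b))))
      (hw_inj.comp (Sum.inl_injective.comp (hpair a)))
      fun b => ⟨mem_range_self _, ?_⟩
    simpa [T] using (hwT (.inl (Nat.pair a b))).1
  · obtain ⟨a, ha⟩ := hr (some j)
    refine infinite_of_injective_forall_mem (f := fun b => z (e (.inr (Nat.pair a b))))
      (hw_inj.comp (Sum.inr_injective.comp (hpair a)))
      fun b => ⟨?_, ?_⟩
    · simpa [T, ha] using hwT (.inr (Nat.pair a b))
    · rintro ⟨m, hm⟩
      exact Sum.inl_ne_inr (hw_inj hm)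
  · refine ((finite_Iic (c k)).image (z ∘ e ∘ Sum.inl)).subset ?_
    rintro _ ⟨⟨m, rfl⟩, hmk⟩
    refine ⟨m, mem_Iic.2 <| not_lt.1 fun hkm => (hwT (.inl m)).2 ?_, rfl⟩
    exact mem_biUnion (by simpa [early] using hkm) hmk

namespace Finset

variable {ι α : Type*} [DecidableEq ι] {s : Finset ι} {f : ι → α} {a : ι} {b : α}

theorem inf_update_of_notMem [SemilatticeInf α] [OrderTop α] (h : a ∉ s) :
    s.inf (update f a b) = s.inf f :=
  inf_congr rfl fun _ hx => update_of_ne (ne_of_mem_of_not_mem hx h) _ _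

theorem inf_update_of_mem [SemilatticeInf α] [OrderTop α] (h : a ∈ s) :
    s.inf (update f a b) = b ⊓ (s.erase a).inf f := by
  rw [← insert_erase h, inf_insert, update_self, erase_insert (notMem_erase a s),
    inf_update_of_notMem (notMem_erase a s)]

theorem sup_update_of_notMem [SemilatticeSup α] [OrderBot α] (h : a ∉ s) :
    s.sup (update f a b) = s.sup f :=
  sup_congr rfl fun _ hx => update_of_ne (ne_of_mem_of_not_mem hx h) _ _

theorem sup_update_of_mem [SemilatticeSup α] [OrderBot α] (h : a ∈ s) :
    s.sup (update f a b) = b ⊔ (s.erase a).sup f := by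
  rw [← insert_erase h, sup_insert, update_self, erase_insert (notMem_erase a s),
    sup_update_of_notMem (notMem_erase a s)]

end Finset

section Realization

variable {ι : Type*} {𝓘 : Set (Finset ι)} {A B : ι → Set ℕ} {s : Set ι}

structure IsRealizedOn (𝓘 : Set (Finset ι)) (A : ι → Set ℕ) (s : Set ι) : Prop where
  finite_inf : ∀ I : Finset ι, I.Nonempty → ↑I ⊆ s → I ∉ 𝓘 → (I.inf A).Finite
  infinite_inf_diff_sup : ∀ I F : Finset ι, (I = ∅ ∨ I ∈ 𝓘) → ↑I ⊆ s → ↑F ⊆ s →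
    Disjoint I F → (I.inf A \ F.sup A).Infinite

theorem IsRealizedOn.congr (hA : IsRealizedOn 𝓘 A s) (h : EqOn A B s) : IsRealizedOn 𝓘 B s := by
  have hinf : ∀ I : Finset ι, ↑I ⊆ s → I.inf A = I.inf B :=
    fun I hI => Finset.inf_congr rfl fun x hx => h (hI hx)
  have hsup : ∀ F : Finset ι, ↑F ⊆ s → F.sup A = F.sup B :=
    fun F hF => Finset.sup_congr rfl fun x hx => h (hF hx)
  refine ⟨fun I hI hIs hI𝓘 => ?_, fun I F hI hIs hFs hIF => ?_⟩
  · rw [← hinf I hIs]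
    exact hA.finite_inf I hI hIs hI𝓘
  · rw [← hinf I hIs, ← hsup F hFs]
    exact hA.infinite_inf_diff_sup I F hI hIs hFs hIF

variable [DecidableEq ι]

theorem IsRealizedOn.of_finset
    (h : ∀ K : Finset ι, K.Nonempty → ↑K ⊆ s → ∃ t, ↑K ⊆ t ∧ IsRealizedOn 𝓘 A t) :
    IsRealizedOn 𝓘 A s := by
  refine ⟨fun I hI hIs hI𝓘 => ?_, fun I F hI hIs hFs hIF => ?_⟩
  · obtain ⟨t, hIt, ht⟩ := h I hI hIs
    exact ht.finite_inf I hI hIt hI𝓘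
  · rcases (I ∪ F).eq_empty_or_nonempty with hIF' | hIF'
    · obtain ⟨rfl, rfl⟩ := Finset.union_eq_empty.1 hIF'
      simpa using infinite_univ
    · obtain ⟨t, hIFt, ht⟩ := h (I ∪ F) hIF' (by simpa using union_subset hIs hFs)
      rw [Finset.coe_union, union_subset_iff] at hIFt
      exact ht.infinite_inf_diff_sup I F hI hIFt.1 hIFt.2 hIF

structure IsAdjoinable (𝓘 : Set (Finset ι)) (A : ι → Set ℕ) (s : Set ι) (α : ι) (S : Set ℕ) :
    Prop where
  infinite_inter : ∀ I F : Finset ι, insert α I ∈ 𝓘 → ↑I ⊆ s → ↑F ⊆ s → Disjoint I F →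
    (S ∩ (I.inf A \ F.sup A)).Infinite
  infinite_diff : ∀ I F : Finset ι, (I = ∅ ∨ I ∈ 𝓘) → ↑I ⊆ s → ↑F ⊆ s → Disjoint I F →
    ((I.inf A \ F.sup A) \ S).Infinite
  finite_inter : ∀ J : Finset ι, (J = ∅ ∨ J ∈ 𝓘) → ↑J ⊆ s → insert α J ∉ 𝓘 →
    (S ∩ J.inf A).Finite

theorem IsRealizedOn.update_insert {α : ι} {S : Set ℕ} (hA : IsRealizedOn 𝓘 A s)
    (hS : IsAdjoinable 𝓘 A s α S) : IsRealizedOn 𝓘 (update A α S) (insert α s) := by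
  have shrink {J : Finset ι} (hJ : ↑J ⊆ insert α s) (hαJ : α ∉ J) : ↑J ⊆ s :=
    fun x hx => (hJ hx).resolve_left (ne_of_mem_of_not_mem hx hαJ)
  have shrink_erase {J : Finset ι} (hJ : ↑J ⊆ insert α s) : ↑(J.erase α) ⊆ s :=
    fun x hx => (hJ (Finset.mem_of_mem_erase hx)).resolve_left (Finset.ne_of_mem_erase hx)
  refine ⟨fun I hI hIs hI𝓘 => ?_, fun I F hI hIs hFs hIF => ?_⟩
  · by_cases hαI : α ∈ I
    · rw [Finset.inf_update_of_mem hαI]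
      by_cases hJ : I.erase α = ∅ ∨ I.erase α ∈ 𝓘
      · exact hS.finite_inter _ hJ (shrink_erase hIs) (by rwa [Finset.insert_erase hαI])
      · rw [not_or, ← ne_eq, ← Finset.nonempty_iff_ne_empty] at hJ
        exact (hA.finite_inf _ hJ.1 (shrink_erase hIs) hJ.2).inter_of_right S
    · rw [Finset.inf_update_of_notMem hαI]
      exact hA.finite_inf I hI (shrink hIs hαI) hI𝓘
  · by_cases hαI : α ∈ I
    · have hαF : α ∉ F := Finset.disjoint_left.1 hIF hαI
      have hI' : insert α (I.erase α) ∈ 𝓘 := by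
        rw [Finset.insert_erase hαI]
        exact hI.resolve_left (Finset.ne_empty_of_mem hαI)
      rw [Finset.inf_update_of_mem hαI, Finset.sup_update_of_notMem hαF,
        inf_sdiff_assoc]
      exact hS.infinite_inter _ F hI' (shrink_erase hIs) (shrink hFs hαF)
        (hIF.mono_left (Finset.erase_subset α I))
    · rw [Finset.inf_update_of_notMem hαI]
      by_cases hαF : α ∈ F
      · rw [Finset.sup_update_of_mem hαF, sup_comm, ← sdiff_sdiff_left]
        exact hS.infinite_diff I _ hI (shrink hIs hαI) (shrink_erase hFs)
          (hIF.mono_right (Finset.erase_subset α F))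
      · rw [Finset.sup_update_of_notMem hαF]
        exact hA.infinite_inf_diff_sup I F hI (shrink hIs hαI) (shrink hFs hαF) hIF

theorem IsRealizedOn.exists_isAdjoinable
    (hdc : ∀ I ∈ 𝓘, ∀ J : Finset ι, J ⊆ I → J.Nonempty → J ∈ 𝓘)
    (hs : s.Countable) (hA : IsRealizedOn 𝓘 A s) (α : ι) : ∃ S, IsAdjoinable 𝓘 A s α S := by
  have hpairs := hs.setOf_finset_subset.prod hs.setOf_finset_subset
  let ToMeet := {p : Finset ι × Finset ι | insert α p.1 ∈ 𝓘 ∧ ↑p.1 ⊆ s ∧ ↑p.2 ⊆ s ∧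
    Disjoint p.1 p.2}
  let ToMiss := {p : Finset ι × Finset ι | (p.1 = ∅ ∨ p.1 ∈ 𝓘) ∧ ↑p.1 ⊆ s ∧ ↑p.2 ⊆ s ∧
    Disjoint p.1 p.2}
  let ToAvoid := {J : Finset ι | (J = ∅ ∨ J ∈ 𝓘) ∧ ↑J ⊆ s ∧ insert α J ∉ 𝓘}
  have : Countable ToMeet := (hpairs.mono fun _ hp => mem_prod.2 ⟨hp.2.1, hp.2.2.1⟩).to_subtype
  have : Countable ToMiss := (hpairs.mono fun _ hp => mem_prod.2 ⟨hp.2.1, hp.2.2.1⟩).to_subtype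
  have : Countable ToAvoid := (hs.setOf_finset_subset.mono fun _ hJ => hJ.2.1).to_subtype
  have hroom : ∀ (p : ToMeet) (K : Finset ToAvoid),
      ((p.1.1.inf A \ p.1.2.sup A) \ ⋃ J ∈ K, J.1.inf A).Infinite := by
    rintro ⟨⟨I, F⟩, hI, hIs, hFs, hIF⟩ K
    -- each `J` to be avoided has a point `γ J ∉ I`, else `insert α J ⊆ insert α I` would lie in `𝓘`
    have hout : ∀ J : ToAvoid, ∃ γ ∈ J.1, γ ∉ I := by
      rintro ⟨J, -, -, hJ⟩
      by_contra! hJI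
      exact hJ (hdc _ hI _ (Finset.insert_subset_insert α hJI) (Finset.insert_nonempty α J))
    choose γ hγJ hγI using hout
    have hI' : I = ∅ ∨ I ∈ 𝓘 :=
      I.eq_empty_or_nonempty.imp_right (hdc _ hI _ (Finset.subset_insert α I))
    have hG : ↑(K.image γ) ⊆ s := by
      rw [Finset.coe_image]
      exact image_subset_iff.2 fun J _ => J.2.2.1 (hγJ J)
    have hIG : Disjoint I (K.image γ) := Finset.disjoint_left.2 fun x hxI hxG => by
      obtain ⟨J, -, rfl⟩ := Finset.mem_image.1 hxG
      exact hγI J hxI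
    refine (hA.infinite_inf_diff_sup I (F ∪ K.image γ) hI' hIs
      (by rw [Finset.coe_union]; exact union_subset hFs hG)
      (Finset.disjoint_union_right.2 ⟨hIF, hIG⟩)).mono ?_
    rintro x ⟨hxI, hxFG⟩
    refine ⟨⟨hxI, fun hxF => hxFG (Finset.sup_mono (f := A) Finset.subset_union_left hxF)⟩, ?_⟩
    simp only [mem_iUnion, not_exists]
    exact fun J hJ hxJ => hxFG <| Finset.le_sup (f := A)
      (Finset.mem_union_right _ (Finset.mem_image_of_mem γ hJ)) (Finset.inf_le (f := A) (hγJ J) hxJ)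
  obtain ⟨S, hMeet, hMiss, hAvoid⟩ := exists_set_infinite_inter_infinite_diff_finite_inter
    (fun p : ToMeet => p.1.1.inf A \ p.1.2.sup A) (fun p : ToMiss => p.1.1.inf A \ p.1.2.sup A)
    (fun J : ToAvoid => J.1.inf A) hroom fun ⟨⟨I, F⟩, hI, hIs, hFs, hIF⟩ =>
      hA.infinite_inf_diff_sup I F hI hIs hFs hIF
  exact ⟨S, fun I F h₁ h₂ h₃ h₄ => hMeet ⟨(I, F), h₁, h₂, h₃, h₄⟩,
    fun I F h₁ h₂ h₃ h₄ => hMiss ⟨(I, F), h₁, h₂, h₃, h₄⟩,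
    fun J h₁ h₂ h₃ => hAvoid ⟨J, h₁, h₂, h₃⟩⟩

end Realization

section Recursion

variable {ι : Type*} [LinearOrder ι] {𝓘 : Set (Finset ι)} {A : ι → Set ℕ}

theorem isRealizedOn_Iio {α : ι} (h : ∀ β < α, IsRealizedOn 𝓘 A (Iic β)) :
    IsRealizedOn 𝓘 A (Iio α) :=
  .of_finset fun K hK hKα =>
    ⟨Iic (K.max' hK), fun x hx => K.le_max' x hx, h _ (hKα (K.max'_mem hK))⟩

variable [WellFoundedLT ι]

-- if no set keeps the family realized on `Iic α`, `Classical.epsilon` returns an arbitrary one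
noncomputable def realizingFamily (𝓘 : Set (Finset ι)) : ι → Set ℕ :=
  wellFounded_lt.fix fun α rec => Classical.epsilon fun S =>
    IsRealizedOn 𝓘 (update (fun β => if h : β < α then rec β h else ∅) α S) (Iic α)

theorem realizingFamily_eq (𝓘 : Set (Finset ι)) (α : ι) :
    realizingFamily 𝓘 α = Classical.epsilon fun S =>
      IsRealizedOn 𝓘 (update (fun β => if β < α then realizingFamily 𝓘 β else ∅) α S) (Iic α) := by
  rw [realizingFamily, WellFounded.fix_eq]
  rfl

theorem isRealizedOn_realizingFamily_Iic
    (hdc : ∀ I ∈ 𝓘, ∀ J : Finset ι, J ⊆ I → J.Nonempty → J ∈ 𝓘)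
    {b : ι} (hb : ∀ β < b, (Iio β).Countable) :
    ∀ α < b, IsRealizedOn 𝓘 (realizingFamily 𝓘) (Iic α) := by
  intro α
  induction α using WellFoundedLT.induction with
  | _ α ih =>
  intro hα
  let B : ι → Set ℕ := fun β => if β < α then realizingFamily 𝓘 β else ∅
  have hB : IsRealizedOn 𝓘 B (Iio α) :=
    (isRealizedOn_Iio fun β hβ => ih β hβ (hβ.trans hα)).congr fun β hβ => (if_pos hβ).symm
  obtain ⟨S, hS⟩ := hB.exists_isAdjoinable hdc (hb α hα) α
  have hBS := hB.update_insert hS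
  rw [Iio_insert] at hBS
  have hα' : IsRealizedOn 𝓘 (update B α (realizingFamily 𝓘 α)) (Iic α) := by
    rw [realizingFamily_eq]
    exact Classical.epsilon_spec (p := fun S => IsRealizedOn 𝓘 (update B α S) (Iic α)) ⟨S, hBS⟩
  refine hα'.congr fun β hβ => ?_
  rcases (mem_Iic.1 hβ).lt_or_eq with hβα | rfl
  · rw [update_of_ne hβα.ne]
    exact if_pos hβα
  · rw [update_self]

theorem exists_family_infinite_inf_iff
    (hdc : ∀ I ∈ 𝓘, ∀ J : Finset ι, J ⊆ I → J.Nonempty → J ∈ 𝓘)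
    {b : ι} (hb : ∀ β < b, (Iio β).Countable) :
    ∃ A : ι → Set ℕ, ∀ I : Finset ι, I.Nonempty → ↑I ⊆ Iio b → ((I.inf A).Infinite ↔ I ∈ 𝓘) := by
  refine ⟨realizingFamily 𝓘, fun I hI hIb => ?_⟩
  have hA := isRealizedOn_realizingFamily_Iic hdc hb _ (hIb (I.max'_mem hI))
  have hIs : ↑I ⊆ Iic (I.max' hI) := fun x hx => I.le_max' x hx
  refine ⟨fun hinf => by_contra fun hI𝓘 => hinf (hA.finite_inf I hI hIs hI𝓘), fun hI𝓘 => ?_⟩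
  simpa using hA.infinite_inf_diff_sup I ∅ (.inr hI𝓘) hIs (by simp) (Finset.disjoint_empty_right I)

end Recursion

theorem Ordinal.countable_Iio_of_lt_ord_aleph_one {β : Ordinal.{0}}
    (hβ : β < (aleph 1).ord) : (Iio β).Countable := by
  rw [← le_aleph0_iff_set_countable, Cardinal.mk_Iio_ordinal, lift_le_aleph0]
  exact lt_aleph_one_iff.1 (lt_ord.1 hβ)

theorem statement_6_general (𝓘 : Set (Finset Ordinal.{0}))
    (hdc : ∀ I ∈ 𝓘, ∀ J : Finset Ordinal.{0}, J ⊆ I → J.Nonempty → J ∈ 𝓘) :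
    ∃ A : Ordinal.{0} → Set ℕ,
      ∀ I : Finset Ordinal.{0}, I.Nonempty →
        (I : Set Ordinal) ⊆ Set.Iio (Cardinal.aleph 1).ord →
        ((⋂ α ∈ I, A α).Infinite ↔ I ∈ 𝓘) := by
  obtain ⟨A, hA⟩ :=
    exists_family_infinite_inf_iff hdc fun _ => Ordinal.countable_Iio_of_lt_ord_aleph_one
  exact ⟨A, fun I hI hIb => by simpa only [Finset.inf_set_eq_iInter] using hA I hI hIb⟩

/-- If `𝓘` is a downwards closed collection of nonempty finite subsets of `ω₁`,
then there is a family `⟨A_α : α < ω₁⟩` of subsets of `ℕ` such that for every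
nonempty finite `I ⊆ ω₁`, the intersection `⋂_{α ∈ I} A_α` is infinite iff `I ∈ 𝓘`. -/
theorem statement_6 (𝓘 : Set (Finset Ordinal.{0}))
    (h𝓘 : ∀ I ∈ 𝓘, I.Nonempty ∧ (I : Set Ordinal) ⊆ Set.Iio (Cardinal.aleph 1).ord)
    (hdc : ∀ I ∈ 𝓘, ∀ J : Finset Ordinal.{0}, J ⊆ I → J.Nonempty → J ∈ 𝓘) :
    ∃ A : Ordinal.{0} → Set ℕ,
      ∀ I : Finset Ordinal.{0}, I.Nonempty →
        (I : Set Ordinal) ⊆ Set.Iio (Cardinal.aleph 1).ord →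
        ((⋂ α ∈ I, A α).Infinite ↔ I ∈ 𝓘) :=
  statement_6_general 𝓘 hdc
end

section
/- Principle C*⁻(ω₁) is false and principle D⁻(ω₁) is false. -/
open Cardinal

/-- `L(A)`: the sets `Y ⊆ ℕ` such that `{α < κ : ∃ n, A(α,n) ⊆ Y}` has cardinality `κ`. -/
def Lcard (κ : Cardinal.{0}) (A : Ordinal.{0} → ℕ → Set ℕ) : Set (Set ℕ) :=
  {Y : Set ℕ | #{α : Ordinal | α < κ.ord ∧ ∃ n : ℕ, A α n ⊆ Y} = Cardinal.lift.{1,0} κ}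

/-- Principle D⁻(κ). -/
def PrincipleDminus (κ : Cardinal.{0}) : Prop :=
  ∀ A : Ordinal.{0} → ℕ → Set ℕ, Centered (Lcard κ A) →
    ∃ S : Set Ordinal, CofinalIn κ.ord S ∧ OmegaAdicOn A S

/-!
Both principles are refuted by one tower: sets `T α ⊆ ℕ` (`α < ω₁`) that strictly increase
modulo finite sets. A tower exists in ZFC because every countable family of functions `ℕ → ℕ` is
eventually strictly dominated by a single function, so an `ω₁`-chain of functions can be built by
transfinite recursion; their hypographs, coded in `ℕ` by `Nat.unpair`, form the tower.

For C*⁻ use the rows `T α` and `(T α)ᶜ`: for `α < β`, `A[(β,α),(0,1)] = T β \ T α` is infinite and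
`A[(α,β),(0,1)] = T α \ T β` is finite, so neither alternative can hold. For D⁻ use the rows
`(T α)ᶜ` and `T α \ [0,n)`: every member of `L(A)` almost contains the gap `T (δ+1) \ T δ` for all
large `δ`, so `L(A)` is centered, while `(T α \ [0,N]) ∩ (T β)ᶜ` is empty once `N` bounds
`T α \ T β`.
-/

universe u

open Set Filter

local notation "ω₁" => Cardinal.ord (Cardinal.aleph 1)

theorem countable_Iio_of_lt_omega_one {α : Ordinal.{u}} (h : α < ω₁) : (Iio α).Countable := by
  rw [← le_aleph0_iff_set_countable, mk_Iio_ordinal, lift_le_aleph0, ← lt_aleph_one_iff,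
    ← Cardinal.lt_ord]
  exact h

theorem succ_lt_omega_one {α : Ordinal.{u}} (h : α < ω₁) : Order.succ α < ω₁ :=
  (Cardinal.isSuccLimit_ord (aleph0_le_aleph 1)).succ_lt h

theorem exists_mem_gt_of_mk_eq_aleph_one {M : Set Ordinal.{u}}
    (hM : #M = Cardinal.lift.{u + 1, u} (aleph 1)) {γ : Ordinal.{u}} (hγ : γ < ω₁) :
    ∃ α ∈ M, γ < α := by
  by_contra! hle
  have hcount : M.Countable :=
    (countable_Iio_of_lt_omega_one (succ_lt_omega_one hγ)).mono fun α hα =>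
      Order.lt_succ_iff.2 (hle α hα)
  have : Cardinal.lift.{u + 1, u} (aleph 1) ≤ ℵ₀ := hM ▸ le_aleph0_iff_set_countable.2 hcount
  exact (lift_le_aleph0.1 this).not_gt aleph0_lt_aleph_one

theorem omega_one_pos : (0 : Ordinal.{u}) < ω₁ := by
  simpa using Ordinal.omega_pos 1

theorem CofinalIn.exists_lt {o : Ordinal} {D₀ D₁ : Set Ordinal} (h₀ : CofinalIn o D₀)
    (h₁ : CofinalIn o D₁) (ho : 0 < o) : ∃ a ∈ D₀, ∃ b ∈ D₁, a < b ∧ b < o := by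
  obtain ⟨a, ha, -⟩ := h₀.2 0 ho
  obtain ⟨b, hb, hab⟩ := h₁.2 a (h₀.1 ha)
  exact ⟨a, ha, b, hb, hab, h₁.1 hb⟩

noncomputable def boundRec {P : Type*} (ub : Set P → P) : Ordinal.{u} → P
  | α => ub (range fun β : Iio α => boundRec ub β)
termination_by α => α
decreasing_by exact β.2

theorem exists_chain_of_countable_bounded {P : Type*} (r : P → P → Prop)
    (h : ∀ s : Set P, s.Countable → ∃ b, ∀ a ∈ s, r a b) :
    ∃ f : Ordinal.{u} → P, ∀ ⦃β α⦄, β < α → α < ω₁ → r (f β) (f α) := by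
  have : ∀ s : Set P, ∃ b, s.Countable → ∀ a ∈ s, r a b := fun s => by
    by_cases hs : s.Countable
    · obtain ⟨b, hb⟩ := h s hs
      exact ⟨b, fun _ => hb⟩
    · obtain ⟨b, -⟩ := h ∅ countable_empty
      exact ⟨b, fun hs' => absurd hs' hs⟩
  choose ub hub using this
  refine ⟨boundRec ub, fun β α hβα hα => ?_⟩
  have := (countable_Iio_of_lt_omega_one hα).to_subtype
  rw [boundRec.eq_1 ub α]
  exact hub _ (countable_range _) _ (mem_range_self (⟨β, hβα⟩ : Iio α))

theorem exists_eventually_lt_of_countable (s : Set (ℕ → ℕ)) (hs : s.Countable) :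
    ∃ g : ℕ → ℕ, ∀ f ∈ s, ∀ᶠ n in atTop, f n < g n := by
  obtain ⟨e, he⟩ := countable_iff_exists_subset_range.1 hs
  refine ⟨fun n => ∑ i ∈ Finset.range (n + 1), e i n + 1, fun f hf => ?_⟩
  obtain ⟨i, rfl⟩ := he hf
  filter_upwards [eventually_ge_atTop i] with n hn
  exact Nat.lt_succ_of_le <| Finset.single_le_sum (f := fun i => e i n)
    (fun _ _ => Nat.zero_le _) (Finset.mem_range.2 (Nat.lt_succ_of_le hn))

def hypograph (f : ℕ → ℕ) : Set ℕ := Nat.unpair ⁻¹' {p | p.2 ≤ f p.1}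

theorem hypograph_diff_finite {f g : ℕ → ℕ} (h : ∀ᶠ n in atTop, f n ≤ g n) :
    (hypograph f \ hypograph g).Finite := by
  obtain ⟨N, hN⟩ := eventually_atTop.1 h
  rw [hypograph, hypograph, ← preimage_sdiff]
  refine Finite.preimage Nat.pairEquiv.symm.injective.injOn <|
    ((finite_Iio N).prod (finite_Iic (∑ n ∈ Finset.range N, f n))).subset ?_
  rintro ⟨n, m⟩ ⟨hm, hm'⟩
  have hn : n < N := by
    by_contra! hn
    exact hm' (hm.trans (hN n hn))
  exact ⟨hn, hm.trans <|
    Finset.single_le_sum (fun _ _ => Nat.zero_le _) (Finset.mem_range.2 hn)⟩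

theorem hypograph_diff_infinite {f g : ℕ → ℕ} (h : ∃ᶠ n in atTop, f n < g n) :
    (hypograph g \ hypograph f).Infinite := by
  rw [hypograph, hypograph, ← preimage_sdiff]
  refine Infinite.preimage ?_ (by simp [Nat.surjective_unpair.range_eq])
  have hinj : InjOn (fun n => (n, g n)) {n | f n < g n} := fun _ _ _ _ h => congrArg Prod.fst h
  refine ((Nat.frequently_atTop_iff_infinite.1 h).image hinj).mono ?_
  rintro _ ⟨n, hn, rfl⟩
  simpa using hn

def IsTower (o : Ordinal) (T : Ordinal → Set ℕ) : Prop :=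
  ∀ ⦃β α⦄, β < α → α < o → (T β \ T α).Finite ∧ (T α \ T β).Infinite

theorem exists_isTower : ∃ T : Ordinal.{u} → Set ℕ, IsTower ω₁ T := by
  obtain ⟨f, hf⟩ := exists_chain_of_countable_bounded
    (fun f g : ℕ → ℕ => ∀ᶠ n in atTop, f n < g n) exists_eventually_lt_of_countable
  refine ⟨fun α => hypograph (f α), fun β α hβα hα => ?_⟩
  exact ⟨hypograph_diff_finite ((hf hβα hα).mono fun _ => le_of_lt),
    hypograph_diff_infinite (hf hβα hα).frequently⟩

theorem IsTower.diff_finite_of_le {o : Ordinal} {T : Ordinal → Set ℕ} (hT : IsTower o T)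
    {β α : Ordinal} (hβα : β ≤ α) (hα : α < o) : (T β \ T α).Finite := by
  rcases hβα.lt_or_eq with hβα | rfl
  · exact (hT hβα hα).1
  · simp

theorem matInt_pair (A : Ordinal → ℕ → Set ℕ) (n m : ℕ) (a b : Ordinal) :
    MatInt A [n, m] ![a, b] = A a n ∩ A b m := by
  ext x
  simp [MatInt, Fin.forall_fin_two]

section

variable {T : Ordinal.{0} → Set ℕ}

def cstarMatrix (T : Ordinal → Set ℕ) (α : Ordinal) (n : ℕ) : Set ℕ :=
  if n = 0 then T α else (T α)ᶜ

theorem not_principleCstarMinus_of_isTower (hT : IsTower ω₁ T) :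
    ¬ PrincipleCstarMinus (Cardinal.aleph 1 : Cardinal.{0}) := by
  intro H
  rcases H {[0, 1]} (cstarMatrix T) with ⟨S, hS, hfin⟩ | ⟨t, rfl, D, hD, hinf⟩
  · obtain ⟨a, ha, b, hb, hab, hb₁⟩ := hS.exists_lt hS omega_one_pos
    have := hfin [0, 1] rfl ![b, a] (by simp [hab.ne']) (by simp [Fin.forall_fin_two, ha, hb])
    exact (hT hab hb₁).2 (by simpa [matInt_pair, cstarMatrix, sdiff_eq] using this)
  · obtain ⟨a, ha, b, hb, hab, hb₁⟩ := (hD 0).exists_lt (hD 1) omega_one_pos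
    have := hinf ![a, b] (by simp [hab.ne]) (by simp [Fin.forall_fin_two, ha, hb])
    exact this (by simpa [matInt_pair, cstarMatrix, sdiff_eq] using (hT hab hb₁).1)

def dminusMatrix (T : Ordinal → Set ℕ) (α : Ordinal) (n : ℕ) : Set ℕ :=
  if n = 0 then (T α)ᶜ else T α \ Iio n

theorem not_omegaAdicOn_dminusMatrix (hT : IsTower ω₁ T) {S : Set Ordinal} (hS : CofinalIn ω₁ S) :
    ¬ OmegaAdicOn (dminusMatrix T) S := by
  intro hadic
  obtain ⟨a, ha, b, hb, hab, hb₁⟩ := hS.exists_lt hS omega_one_pos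
  obtain ⟨N, hN⟩ := (hT hab hb₁).1.bddAbove
  obtain ⟨x, ⟨hxa, hxN⟩, hxb⟩ := by
    simpa [matInt_pair, dminusMatrix] using
      hadic [N + 1, 0] ![a, b] (by simp [hab.ne]) (by simp [Fin.forall_fin_two, ha, hb])
  exact hxN (Nat.lt_succ_of_le (hN ⟨hxa, hxb⟩))

theorem eventually_gap_diff_finite_of_mem_Lcard (hT : IsTower ω₁ T) {Y : Set ℕ}
    (hY : Y ∈ Lcard (Cardinal.aleph 1) (dminusMatrix T)) :
    ∀ᶠ δ : Iio ω₁ in atTop, ((T (Order.succ δ) \ T δ) \ Y).Finite := by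
  by_cases hc : ∃ a < ω₁, Yᶜ ⊆ T a
  · obtain ⟨a, ha, hYa⟩ := hc
    filter_upwards [eventually_ge_atTop ⟨a, ha⟩] with δ hδ
    refine (hT.diff_finite_of_le hδ δ.2).subset ?_
    rintro x ⟨⟨-, hxδ⟩, hxY⟩
    exact ⟨hYa hxY, hxδ⟩
  -- Now no row `(T α)ᶜ` lies in `Y`, so `Y` almost contains `T α` for cofinally many `α`.
  push Not at hc
  refine Eventually.of_forall fun δ => ?_
  obtain ⟨α, ⟨hα, n, hn⟩, hδα⟩ := exists_mem_gt_of_mk_eq_aleph_one hY (succ_lt_omega_one δ.2)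
  have hn₀ : n ≠ 0 := by
    rintro rfl
    refine hc α hα fun x hxY => ?_
    by_contra hxT
    exact hxY (hn (by simpa [dminusMatrix] using hxT))
  have hαY : (T α \ Y).Finite := by
    refine (finite_Iio n).subset fun x ⟨hxT, hxY⟩ => ?_
    by_contra hxn
    exact hxY (hn (by simp [dminusMatrix, hn₀, hxT, hxn]))
  refine ((hT hδα hα).1.union hαY).subset ?_
  rintro x ⟨⟨hx, -⟩, hxY⟩
  by_cases hxα : x ∈ T α
  · exact Or.inr ⟨hxα, hxY⟩
  · exact Or.inl ⟨hx, hxα⟩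

theorem centered_Lcard_dminusMatrix (hT : IsTower ω₁ T) :
    Centered (Lcard (Cardinal.aleph 1) (dminusMatrix T)) := by
  intro F hF
  have : Nonempty (Iio ω₁) := ⟨⟨0, omega_one_pos⟩⟩
  obtain ⟨δ, hδ⟩ := ((eventually_all_finset F).2 fun Y hY =>
    eventually_gap_diff_finite_of_mem_Lcard hT (hF hY)).exists
  have hgap : (T (Order.succ δ) \ T δ).Infinite :=
    (hT (Order.lt_succ δ.1) (succ_lt_omega_one δ.2)).2
  obtain ⟨x, hx, hxF⟩ := (hgap.sdiff (F.finite_toSet.biUnion hδ)).nonempty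
  exact ⟨x, fun Y hY => by_contra fun hxY => hxF (mem_biUnion hY ⟨hx, hxY⟩)⟩

theorem not_principleDminus_of_isTower (hT : IsTower ω₁ T) :
    ¬ PrincipleDminus (Cardinal.aleph 1 : Cardinal.{0}) := fun H =>
  have ⟨_, hS, hadic⟩ := H (dminusMatrix T) (centered_Lcard_dminusMatrix hT)
  not_omegaAdicOn_dminusMatrix hT hS hadic

end

/-- Principle C*⁻(ω₁) is false, and principle D⁻(ω₁) is false. -/
theorem statement_8 :
    ¬ PrincipleCstarMinus (Cardinal.aleph 1 : Cardinal.{0}) ∧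
      ¬ PrincipleDminus (Cardinal.aleph 1 : Cardinal.{0}) := by
  obtain ⟨T, hT⟩ := exists_isTower
  exact ⟨not_principleCstarMinus_of_isTower hT, not_principleDminus_of_isTower hT⟩
end

section
/- Let κ be a regular uncountable cardinal and assume principle C⁻(κ). Then for every family 𝓐 of infinite subsets of ℕ with |𝓐| = κ, either (a) there is 𝓑 ⊆ 𝓐 with |𝓑| = κ such that B ∖ B' is infinite for all distinct B, B' ∈ 𝓑, or (b) there is an infinite X ⊆ ℕ such that both {A ∈ 𝓐 : A ⊆ X} and {A ∈ 𝓐 : X ⊆* A} have cardinality κ, where X ⊆* A means X ∖ A is finite. -/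
open Cardinal

/-- Principle C⁻(κ). -/
def PrincipleCminus (κ : Cardinal) : Prop :=
  ∀ (T : Set (List ℕ)) (A : Ordinal → ℕ → Set ℕ),
    (∃ S : Set Ordinal, CofinalIn κ.ord S ∧
      ∀ t ∈ T, ∀ s : Fin t.length → Ordinal, Function.Injective s →
        (∀ i, s i ∈ S) → (MatInt A t s).Nonempty) ∨
    (∃ t ∈ T, ∃ D : Fin t.length → Set Ordinal,
      (∀ i, CofinalIn κ.ord (D i)) ∧
      ∀ s : Fin t.length → Ordinal, Function.Injective s →
        (∀ i, s i ∈ D i) → MatInt A t s = ∅)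

/-!
Write the family as the rows `G α` of a κ×ω-matrix whose columns `2n` and `2n + 1` hold `G α`
and the complement of `G α ∪ [0, n)`, so that `A[(α, β), (2n, 2n + 1)] = G α \ (G β ∪ [0, n))`.
Applied to the patterns `(2n, 2n + 1)`, C⁻(κ) yields either κ many members with pairwise
infinite differences, or `n` and κ-sized subfamilies `𝓓₀, 𝓓₁` with `A ⊆ B ∪ [0, n)` for all
distinct `A ∈ 𝓓₀`, `B ∈ 𝓓₁`. In the second case, run the dichotomy again inside `𝓓₁`: a member
`B₀` of the new `𝓕₀` almost contains every member of `𝓓₀` and is almost contained in every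
member of `𝓕₁`, so `X = B₀ ∪ [0, n)` works.
-/

open Set

universe u v

theorem CofinalIn.mk_eq {κ : Cardinal.{u}} (hκ : κ.IsRegular) {S : Set Ordinal.{u}}
    (hS : CofinalIn κ.ord S) : #S = lift.{u + 1} κ := by
  refine le_antisymm ?_ (not_lt.1 fun hlt => ?_)
  · calc #S ≤ #(Iio κ.ord) := mk_le_mk_of_subset hS.1
      _ = lift.{u + 1} κ := by rw [mk_Iio_ordinal, card_ord]
  · have hsup : sSup S < κ.ord :=
      Ordinal.sSup_lt_of_lt_cof (by rwa [← Ordinal.lift_cof, hκ.cof_ord]) fun _ hβ => hS.1 hβ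
    obtain ⟨β, hβS, hβ⟩ := hS.2 _ hsup
    exact hβ.not_ge (le_csSup ⟨κ.ord, fun _ hγ => (hS.1 hγ).le⟩ hβS)

theorem exists_bijOn_of_lift_mk_eq {α : Type u} {β : Type v} [Nonempty β] {s : Set α}
    {t : Set β} (h : lift.{v} #s = lift.{u} #t) : ∃ f : α → β, BijOn f s t := by
  classical
  obtain ⟨e⟩ := lift_mk_eq'.1 h
  refine ⟨fun a => if ha : a ∈ s then e ⟨a, ha⟩ else Classical.arbitrary β, ?_, ?_, ?_⟩
  · intro a ha
    simp [ha]
  · intro a ha b hb hab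
    simp only [ha, hb, dite_true] at hab
    exact congrArg Subtype.val (e.injective (Subtype.ext hab))
  · intro b hb
    obtain ⟨⟨a, ha⟩, hab⟩ := e.surjective ⟨b, hb⟩
    exact ⟨a, ha, by simp [ha, hab]⟩

def diffMatrix (G : Ordinal → Set ℕ) : Ordinal → ℕ → Set ℕ :=
  fun α m => if m % 2 = 0 then G α else (G α ∪ Iio (m / 2))ᶜ

def diffPatterns : Set (List ℕ) := range fun n => [2 * n, 2 * n + 1]

theorem matInt_diffMatrix (G : Ordinal → Set ℕ) (n : ℕ) (α β : Ordinal) :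
    MatInt (diffMatrix G) [2 * n, 2 * n + 1] ![α, β] = G α \ (G β ∪ Iio n) := by
  ext x
  have hhalf : (2 * n + 1) / 2 = n := by omega
  simp [MatInt, diffMatrix, Fin.forall_fin_two, hhalf]

theorem PrincipleCminus.exists_cofinal_infinite_diff_or_subset_union_Iio {κ : Cardinal}
    (hC : PrincipleCminus κ) (G : Ordinal → Set ℕ) :
    (∃ S, CofinalIn κ.ord S ∧ ∀ α ∈ S, ∀ β ∈ S, α ≠ β → (G α \ G β).Infinite) ∨
    ∃ n : ℕ, ∃ D₀ D₁, CofinalIn κ.ord D₀ ∧ CofinalIn κ.ord D₁ ∧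
      ∀ α ∈ D₀, ∀ β ∈ D₁, α ≠ β → G α ⊆ G β ∪ Iio n := by
  have pair_injective {α β : Ordinal} (h : α ≠ β) : Function.Injective ![α, β] := by
    intro i j hij
    fin_cases i <;> fin_cases j <;> simp_all
  rcases hC diffPatterns (diffMatrix G) with ⟨S, hS, hne⟩ | ⟨_, ⟨n, rfl⟩, D, hD, hempty⟩
  · refine .inl ⟨S, hS, fun α hα β hβ hαβ => infinite_of_forall_exists_gt fun k => ?_⟩
    obtain ⟨x, hx⟩ := hne _ ⟨k + 1, rfl⟩ ![α, β] (pair_injective hαβ)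
      (by simp [Fin.forall_fin_two, hα, hβ])
    rw [matInt_diffMatrix] at hx
    simp only [mem_sdiff, mem_union, mem_Iio, not_or, not_lt] at hx
    exact ⟨x, ⟨hx.1, hx.2.1⟩, hx.2.2⟩
  · refine .inr ⟨n, D 0, D 1, hD 0, hD 1, fun α hα β hβ hαβ => ?_⟩
    have := hempty ![α, β] (pair_injective hαβ) (by simp [Fin.forall_fin_two, hα, hβ])
    rwa [matInt_diffMatrix, sdiff_eq_empty] at this

theorem PrincipleCminus.exists_infinite_diff_or_subset_union_Iio {κ : Cardinal.{0}}
    (hκ : κ.IsRegular) (hC : PrincipleCminus κ) (𝓕 : Set (Set ℕ)) (h𝓕 : #𝓕 = κ) :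
    (∃ 𝓑 ⊆ 𝓕, #𝓑 = κ ∧ ∀ B ∈ 𝓑, ∀ B' ∈ 𝓑, B ≠ B' → (B \ B').Infinite) ∨
    ∃ n : ℕ, ∃ 𝓓₀ ⊆ 𝓕, ∃ 𝓓₁ ⊆ 𝓕, #𝓓₀ = κ ∧ #𝓓₁ = κ ∧
      ∀ A ∈ 𝓓₀, ∀ B ∈ 𝓓₁, A ≠ B → A ⊆ B ∪ Iio n := by
  obtain ⟨G, hG⟩ : ∃ G : Ordinal → Set ℕ, BijOn G (Iio κ.ord) 𝓕 :=
    exists_bijOn_of_lift_mk_eq (by rw [mk_Iio_ordinal, card_ord, lift_lift, h𝓕])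
  have image_subset {S} (hS : CofinalIn κ.ord S) : G '' S ⊆ 𝓕 :=
    image_subset_iff.2 fun _ hα => hG.mapsTo (hS.1 hα)
  have mk_image {S} (hS : CofinalIn κ.ord S) : #(G '' S) = κ := by
    have := mk_image_eq_of_injOn_lift G S (hG.injOn.mono hS.1)
    rwa [hS.mk_eq hκ, lift_id', lift_inj] at this
  rcases hC.exists_cofinal_infinite_diff_or_subset_union_Iio G with
    ⟨S, hS, hdiff⟩ | ⟨n, D₀, D₁, hD₀, hD₁, hsub⟩
  · refine .inl ⟨G '' S, image_subset hS, mk_image hS, ?_⟩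
    rintro _ ⟨α, hα, rfl⟩ _ ⟨β, hβ, rfl⟩ hne
    exact hdiff α hα β hβ (ne_of_apply_ne G hne)
  · refine .inr ⟨n, G '' D₀, image_subset hD₀, G '' D₁, image_subset hD₁, mk_image hD₀,
      mk_image hD₁, ?_⟩
    rintro _ ⟨α, hα, rfl⟩ _ ⟨β, hβ, rfl⟩ hne
    exact hsub α hα β hβ (ne_of_apply_ne G hne)

theorem mk_sep_eq_of_subset {α : Type u} {s t : Set α} {P : α → Prop} (hts : t ⊆ s)
    (hP : ∀ a ∈ t, P a) (h : #t = #s) : #{a | a ∈ s ∧ P a} = #s :=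
  le_antisymm (mk_le_mk_of_subset fun _ ha => ha.1)
    (h ▸ mk_le_mk_of_subset fun a ha => ⟨hts ha, hP a ha⟩)

theorem finite_union_Iio_sdiff {A B : Set ℕ} {m : ℕ} (h : B ⊆ A ∪ Iio m) (n : ℕ) :
    ((B ∪ Iio n) \ A).Finite := by
  refine (finite_Iio (max n m)).subset fun x ⟨hx, hxA⟩ => mem_Iio.2 ?_
  rcases hx with hxB | hxn
  · exact lt_max_of_lt_right (mem_Iio.1 ((h hxB).resolve_left hxA))
  · exact lt_max_of_lt_left (mem_Iio.1 hxn)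

theorem statement_10_general (κ : Cardinal.{0}) (hreg : κ.IsRegular)
    (hC : PrincipleCminus κ)
    (𝓐 : Set (Set ℕ)) (hinf : ∀ A ∈ 𝓐, A.Infinite) (hcard : #𝓐 = κ) :
    (∃ 𝓑 ⊆ 𝓐, #𝓑 = κ ∧ ∀ B ∈ 𝓑, ∀ B' ∈ 𝓑, B ≠ B' → (B \ B').Infinite) ∨
    (∃ X : Set ℕ, X.Infinite ∧ #{A : Set ℕ | A ∈ 𝓐 ∧ A ⊆ X} = κ ∧
      #{A : Set ℕ | A ∈ 𝓐 ∧ (X \ A).Finite} = κ) := by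
  rcases hC.exists_infinite_diff_or_subset_union_Iio hreg 𝓐 hcard with
    h | ⟨n, 𝓓₀, h𝓓₀, 𝓓₁, h𝓓₁, hcard₀, hcard₁, hbelow⟩
  · exact .inl h
  rcases hC.exists_infinite_diff_or_subset_union_Iio hreg 𝓓₁ hcard₁ with
    ⟨𝓑, h𝓑, hcard𝓑, hdiff⟩ | ⟨m, 𝓕₀, h𝓕₀, 𝓕₁, h𝓕₁, hcard₀', hcard₁', habove⟩
  · exact .inl ⟨𝓑, h𝓑.trans h𝓓₁, hcard𝓑, hdiff⟩
  obtain ⟨B₀, hB₀⟩ : 𝓕₀.Nonempty := by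
    rw [← nonempty_coe_sort, ← mk_ne_zero_iff, hcard₀']
    exact hreg.pos.ne'
  have hbelow₀ (A) (hA : A ∈ 𝓓₀) : A ⊆ B₀ ∪ Iio n :=
    (eq_or_ne A B₀).elim (fun h => h ▸ subset_union_left) (hbelow A hA B₀ (h𝓕₀ hB₀))
  have habove₀ (A) (hA : A ∈ 𝓕₁) : B₀ ⊆ A ∪ Iio m :=
    (eq_or_ne B₀ A).elim (fun h => h ▸ subset_union_left) (habove B₀ hB₀ A hA)
  refine .inr ⟨B₀ ∪ Iio n, (hinf B₀ (h𝓓₁ (h𝓕₀ hB₀))).mono subset_union_left, ?_, ?_⟩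
  · exact (mk_sep_eq_of_subset h𝓓₀ hbelow₀ (hcard₀.trans hcard.symm)).trans hcard
  · exact (mk_sep_eq_of_subset (h𝓕₁.trans h𝓓₁) (fun A hA => finite_union_Iio_sdiff (habove₀ A hA) n)
      (hcard₁'.trans hcard.symm)).trans hcard

/-- Under C⁻(κ), any κ-sized family of infinite subsets of ℕ either has a κ-sized
subfamily with all pairwise differences infinite, or there is an infinite `X ⊆ ℕ`
with κ many members of the family below `X` and κ many members almost above `X`. -/
theorem statement_10 (κ : Cardinal.{0}) (hreg : κ.IsRegular) (hunc : ℵ₀ < κ)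
    (hC : PrincipleCminus κ)
    (𝓐 : Set (Set ℕ)) (hinf : ∀ A ∈ 𝓐, A.Infinite) (hcard : #𝓐 = κ) :
    (∃ 𝓑 ⊆ 𝓐, #𝓑 = κ ∧ ∀ B ∈ 𝓑, ∀ B' ∈ 𝓑, B ≠ B' → (B \ B').Infinite) ∨
    (∃ X : Set ℕ, X.Infinite ∧ #{A : Set ℕ | A ∈ 𝓐 ∧ A ⊆ X} = κ ∧
      #{A : Set ℕ | A ∈ 𝓐 ∧ (X \ A).Finite} = κ) :=
  statement_10_general κ hreg hC 𝓐 hinf hcard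
end

section
/- Let κ be a regular uncountable cardinal and assume principle C⁻(κ). Then there is no strictly ⊆*-increasing chain of infinite subsets of ℕ of length κ, i.e., no sequence ⟨T_α : α < κ⟩ of infinite subsets of ℕ such that for all α < β < κ, T_α ∖ T_β is finite and T_β ∖ T_α is infinite. -/
open Cardinal

/-- Under C⁻(κ), there is no strictly ⊆*-increasing chain of infinite subsets of ℕ
of length κ. -/
theorem statement_11 (κ : Cardinal.{0}) (hreg : κ.IsRegular) (hunc : ℵ₀ < κ)
    (hC : PrincipleCminus κ) :
    ¬ ∃ T : Ordinal.{0} → Set ℕ,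
        (∀ α < κ.ord, (T α).Infinite) ∧
        ∀ α β : Ordinal.{0}, α < β → β < κ.ord →
          (T α \ T β).Finite ∧ (T β \ T α).Infinite := by
  rintro ⟨T, -, hchain⟩
  have hord0 : (0 : Ordinal) < κ.ord := by
    rw [← Cardinal.ord_zero]
    exact Cardinal.ord_lt_ord.2 (lt_trans aleph0_pos hunc)
  set A : Ordinal → ℕ → Set ℕ :=
    fun α n => if n % 2 = 0 then T α \ Set.Iio (n / 2) else (T α)ᶜ \ Set.Iio (n / 2) with hA
  set Tset : Set (List ℕ) := {l | ∃ k : ℕ, l = [2 * k, 2 * k + 1]} with hTset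
  rcases hC Tset A with ⟨S, ⟨hSsub, hScof⟩, h1⟩ | ⟨t, ⟨k, rfl⟩, D, hDcof, h2⟩
  · obtain ⟨β, hβS, -⟩ := hScof 0 hord0
    obtain ⟨γ, hγS, hβγ⟩ := hScof β (hSsub hβS)
    have hfin : (T β \ T γ).Finite := (hchain β γ hβγ (hSsub hγS)).1
    obtain ⟨b, hb⟩ := hfin.bddAbove
    set k := b + 1 with hk
    have hbound : ∀ x ∈ T β \ T γ, x < k := fun x hx => Nat.lt_succ_of_le (hb hx)
    have hne : β ≠ γ := ne_of_lt hβγ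
    have hs : Function.Injective (![β, γ] : Fin 2 → Ordinal) := by
      intro i j hij
      fin_cases i <;> fin_cases j <;> simp_all
    have hmem : ∀ i : Fin 2, (![β, γ] : Fin 2 → Ordinal) i ∈ S := by
      intro i; fin_cases i <;> simpa
    obtain ⟨x, hx⟩ := h1 [2 * k, 2 * k + 1] ⟨k, rfl⟩ ![β, γ] hs hmem
    rw [MatInt, Set.mem_iInter] at hx
    have hx0 : x ∈ A β (2 * k) := hx ⟨0, Nat.succ_le_succ (Nat.zero_le _)⟩
    have hx1 : x ∈ A γ (2 * k + 1) := hx ⟨1, Nat.lt_succ_self 1⟩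
    simp only [hA] at hx0 hx1
    rw [if_pos (by omega)] at hx0
    rw [if_neg (by omega)] at hx1
    have h2k : 2 * k / 2 = k := by omega
    have h2k1 : (2 * k + 1) / 2 = k := by omega
    rw [h2k] at hx0
    rw [h2k1] at hx1
    exact absurd (hbound x ⟨hx0.1, hx1.1⟩) (by simpa using hx0.2)
  · obtain ⟨hD1sub, hD1cof⟩ := hDcof ⟨1, by norm_num⟩
    obtain ⟨hD0sub, hD0cof⟩ := hDcof ⟨0, by norm_num⟩
    obtain ⟨β, hβD, -⟩ := hD1cof 0 hord0
    obtain ⟨γ, hγD, hβγ⟩ := hD0cof β (hD1sub hβD)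
    have hinf : (T γ \ T β).Infinite := (hchain β γ hβγ (hD0sub hγD)).2
    have hne : γ ≠ β := (ne_of_lt hβγ).symm
    have hs : Function.Injective (![γ, β] : Fin 2 → Ordinal) := by
      intro i j hij
      fin_cases i <;> fin_cases j <;> simp_all
    have hmem : ∀ i : Fin ([2 * k, 2 * k + 1] : List ℕ).length,
        (![γ, β] : Fin 2 → Ordinal) i ∈ D i := by
      intro i
      fin_cases i
      · exact hγD
      · exact hβD
    have hempty := h2 ![γ, β] hs hmem
    obtain ⟨x, hx⟩ := (hinf.diff (Set.finite_Iio k)).nonempty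
    have h2k : 2 * k / 2 = k := by omega
    have h2k1 : (2 * k + 1) / 2 = k := by omega
    have hxmem : x ∈ MatInt A [2 * k, 2 * k + 1] ![γ, β] := by
      rw [MatInt, Set.mem_iInter]
      intro i
      fin_cases i
      · show x ∈ A γ (2 * k)
        simp only [hA]
        rw [if_pos (by omega), h2k]
        exact ⟨hx.1.1, hx.2⟩
      · show x ∈ A β (2 * k + 1)
        simp only [hA]
        rw [if_neg (by omega), h2k1]
        exact ⟨hx.1.2, hx.2⟩
    rw [hempty] at hxmem
    exact hxmem
end

section
/- Let κ be a regular uncountable cardinal and assume principle C⁻(κ). Then for every family 𝓐 of infinite subsets of ℕ with |𝓐| = κ and every natural number k ≥ 1, either (a) there is 𝓑 ⊆ 𝓐 with |𝓑| = κ such that ⋂𝓑' is infinite for every k-element subfamily 𝓑' of 𝓑, or (b) there are subfamilies 𝓑_0, …, 𝓑_{k−1} of 𝓐, each of cardinality κ, such that ⋂_{i<k} (⋃𝓑_i) is finite. -/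
/-!
Enumerate `𝓐` injectively as `(E α)_{α < κ}` and apply `C⁻(κ)` to the matrix
`A(α, n) = E α ∩ [n, ∞)` and the sequences of length `k`. In the first alternative every
intersection of `k` distinct rows `E α`, `α ∈ S`, meets every tail `[n, ∞)`, hence is infinite, and a
cofinal `S` has size `κ` by regularity.

In the second alternative, first thin the cofinal sets `D i` out to pairwise disjoint subsets of
size `κ`: colour the ordinals below `κ` so that each colour occurs `κ` times, and at stage `ν` pick
the least element of `D (c ν)` above all earlier picks, which exists by regularity. A point of
`⋂ i, ⋃_{α ∈ D i} E α` beyond every entry of `t` would then lie in some `A[s, t]` with `s` injective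
and `s i ∈ D i`, so this intersection is bounded.
-/

open Cardinal

open Set Function

universe u

namespace CofinalIn

variable {κ : Cardinal.{u}} {D : Set Ordinal.{u}}

theorem exists_forall_lt (hreg : κ.IsRegular) (hD : CofinalIn κ.ord D) {X : Set Ordinal.{u}}
    (hX : X ⊆ Iio κ.ord) (hXcard : #X < lift.{u + 1} κ) : ∃ β ∈ D, ∀ x ∈ X, x < β := by
  have hsup : sSup X < κ.ord := by
    refine Ordinal.sSup_lt_of_lt_cof ?_ hX
    rwa [← Ordinal.lift_cof, hreg.cof_ord]
  obtain ⟨β, hβD, hβ⟩ := hD.2 _ hsup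
  exact ⟨β, hβD, fun x hx ↦ (le_csSup (bddAbove_Iio.mono hX) hx).trans_lt hβ⟩

theorem mk_eq_s12 (hreg : κ.IsRegular) (hD : CofinalIn κ.ord D) : #D = lift.{u + 1} κ := by
  refine le_antisymm ?_ (not_lt.1 fun hlt ↦ ?_)
  · simpa using mk_le_mk_of_subset hD.1
  · obtain ⟨β, hβD, hβ⟩ := hD.exists_forall_lt hreg hD.1 hlt
    exact (hβ β hβD).false

end CofinalIn

noncomputable def greedySeq (D : Ordinal.{u} → Set Ordinal.{u}) (ν : Ordinal.{u}) : Ordinal.{u} :=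
  sInf {γ ∈ D ν | ∀ μ < ν, greedySeq D μ < γ}
termination_by ν

theorem greedySeq_spec {κ : Cardinal.{u}} (hreg : κ.IsRegular) {D : Ordinal.{u} → Set Ordinal.{u}}
    (hD : ∀ ν < κ.ord, CofinalIn κ.ord (D ν)) (ν : Ordinal.{u}) (hν : ν < κ.ord) :
    greedySeq D ν ∈ D ν ∧ greedySeq D ν < κ.ord ∧ ∀ μ < ν, greedySeq D μ < greedySeq D ν := by
  induction ν using WellFoundedLT.induction with
  | ind ν ih =>
    have hprev : greedySeq D '' Iio ν ⊆ Iio κ.ord := by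
      rintro _ ⟨μ, hμ, rfl⟩
      exact (ih μ hμ (hμ.trans hν)).2.1
    have hcard : #(greedySeq D '' Iio ν) < lift.{u + 1} κ := by
      refine mk_image_le.trans_lt ?_
      rw [mk_Iio_ordinal, lift_lt]
      exact lt_ord.1 hν
    obtain ⟨β, hβD, hβ⟩ := (hD ν hν).exists_forall_lt hreg hprev hcard
    have hβmem : β ∈ {γ ∈ D ν | ∀ μ < ν, greedySeq D μ < γ} :=
      ⟨hβD, fun μ hμ ↦ hβ _ (mem_image_of_mem _ hμ)⟩
    rw [greedySeq]
    obtain ⟨hmemD, hgt⟩ := csInf_mem ⟨β, hβmem⟩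
    exact ⟨hmemD, (csInf_le' hβmem).trans_lt ((hD ν hν).1 hβD), hgt⟩

theorem exists_fibers_mk_eq {κ : Cardinal.{u}} (hκ : ℵ₀ ≤ κ) {ι : Type u} [Nonempty ι]
    (hι : #ι ≤ κ) : ∃ c : Ordinal.{u} → ι, ∀ i, #{ν | ν < κ.ord ∧ c ν = i} = lift.{u + 1} κ := by
  have hIio : #(Iio κ.ord) = lift.{u + 1} κ := by rw [mk_Iio_ordinal, card_ord]
  have hprod : #(Iio κ.ord × ι) = #(Iio κ.ord) := by
    simp only [mk_prod, hIio, lift_lift, ← lift_mul, lift_inj]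
    exact Cardinal.mul_eq_left hκ hι (mk_ne_zero ι)
  obtain ⟨φ⟩ := Cardinal.eq.1 hprod.symm
  refine ⟨fun ν ↦ if h : ν < κ.ord then (φ ⟨ν, h⟩).2 else Classical.arbitrary ι, fun i ↦ ?_⟩
  refine le_antisymm (hIio ▸ mk_le_mk_of_subset fun ν hν ↦ hν.1) (hIio ▸ ?_)
  refine mk_le_of_injective (f := fun x ↦ ⟨(φ.symm (x, i)).1, (φ.symm (x, i)).2, ?_⟩) ?_
  · simp only [mem_Iio.1 (φ.symm (x, i)).2, dif_pos]
    exact congrArg Prod.snd (φ.apply_symm_apply (x, i))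
  · intro x y hxy
    have h : φ.symm (x, i) = φ.symm (y, i) := Subtype.ext (congrArg Subtype.val hxy :)
    exact congrArg Prod.fst (φ.symm.injective h)

theorem exists_pairwiseDisjoint_subsets_of_cofinalIn {κ : Cardinal.{u}} (hreg : κ.IsRegular)
    {ι : Type u} [Nonempty ι] (hι : #ι ≤ κ) {D : ι → Set Ordinal.{u}}
    (hD : ∀ i, CofinalIn κ.ord (D i)) :
    ∃ D' : ι → Set Ordinal.{u},
      (∀ i, D' i ⊆ D i ∧ #(D' i) = lift.{u + 1} κ) ∧ Pairwise (Disjoint on D') := by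
  obtain ⟨c, hc⟩ := exists_fibers_mk_eq hreg.aleph0_le hι
  have hg := greedySeq_spec hreg (D := D ∘ c) fun ν _ ↦ hD (c ν)
  have hinj : InjOn (greedySeq (D ∘ c)) (Iio κ.ord) :=
    StrictMonoOn.injOn fun μ _ ν hν hμν ↦ (hg ν hν).2.2 μ hμν
  refine ⟨fun i ↦ greedySeq (D ∘ c) '' {ν | ν < κ.ord ∧ c ν = i}, fun i ↦ ⟨?_, ?_⟩, ?_⟩
  · rintro _ ⟨ν, ⟨hν, rfl⟩, rfl⟩
    exact (hg ν hν).1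
  · rw [← hc i, mk_image_eq_of_injOn _ _ (hinj.mono fun ν hν ↦ hν.1)]
  · intro i j hij
    refine Set.disjoint_left.2 ?_
    rintro _ ⟨ν, ⟨hν, rfl⟩, rfl⟩ ⟨μ, ⟨hμ, rfl⟩, heq⟩
    exact hij (congrArg c (hinj hμ hν heq)).symm

theorem exists_mapsTo_injOn_Iio_ord {β : Type u} [Nonempty β] {s : Set β} {κ : Cardinal.{u}}
    (h : κ ≤ #s) : ∃ E : Ordinal.{u} → β, MapsTo E (Iio κ.ord) s ∧ InjOn E (Iio κ.ord) := by
  obtain ⟨f⟩ : Nonempty (Iio κ.ord ↪ s) := by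
    rw [← lift_mk_le', mk_Iio_ordinal, card_ord, lift_lift]
    exact lift_le.2 h
  refine ⟨fun α ↦ if hα : α < κ.ord then f ⟨α, hα⟩ else Classical.arbitrary β,
    fun α hα ↦ ?_, fun α hα γ hγ hαγ ↦ ?_⟩
  · simp only [mem_Iio.1 hα, dif_pos]
    exact (f _).2
  · simp only [mem_Iio.1 hα, mem_Iio.1 hγ, dif_pos] at hαγ
    exact congrArg Subtype.val (f.injective (Subtype.ext hαγ))

theorem mk_image_eq_of_injOn_Iio_ord {β : Type u} {κ : Cardinal.{u}} {E : Ordinal.{u} → β}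
    (hE : InjOn E (Iio κ.ord)) {X : Set Ordinal.{u}} (hX : X ⊆ Iio κ.ord)
    (hXcard : #X = lift.{u + 1} κ) : #(E '' X) = κ := by
  have h := mk_image_eq_of_injOn_lift E X (hE.mono hX)
  rwa [hXcard, lift_lift, lift_inj] at h

theorem Finset.exists_fin_enum_of_subset_image {α β : Type*} {E : α → β} {S : Set α}
    {F : Finset β} (hF : ↑F ⊆ E '' S) :
    ∃ a : Fin F.card → α, (∀ i, a i ∈ S) ∧ Injective (E ∘ a) ∧ Set.range (E ∘ a) = ↑F := by
  choose a haS haE using fun i ↦ hF (F.equivFin.symm i).2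
  have hEa : E ∘ a = Subtype.val ∘ F.equivFin.symm := funext haE
  refine ⟨a, haS, ?_, ?_⟩
  · rw [hEa]
    exact Subtype.val_injective.comp F.equivFin.symm.injective
  · rw [hEa, range_comp, F.equivFin.symm.range_eq_univ, image_univ, Subtype.range_coe]

def tailMatrix (E : Ordinal → Set ℕ) (α : Ordinal) (n : ℕ) : Set ℕ :=
  E α ∩ Ici n

theorem mem_matInt_tailMatrix {E : Ordinal → Set ℕ} {t : List ℕ} {s : Fin t.length → Ordinal}
    {m : ℕ} : m ∈ MatInt (tailMatrix E) t s ↔ ∀ i, m ∈ E (s i) ∧ t.get i ≤ m := by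
  simp [MatInt, tailMatrix]

theorem iInter_infinite_of_matInt_replicate_nonempty {E : Ordinal → Set ℕ} {k : ℕ} (hk : 1 ≤ k)
    {a : Fin k → Ordinal}
    (h : ∀ n, (MatInt (tailMatrix E) (List.replicate k n)
      (a ∘ Fin.cast List.length_replicate)).Nonempty) :
    (⋂ i, E (a i)).Infinite := by
  refine Set.infinite_of_forall_exists_gt fun n ↦ ?_
  obtain ⟨m, hm⟩ := h (n + 1)
  rw [mem_matInt_tailMatrix] at hm
  refine ⟨m, mem_iInter.2 fun i ↦ (hm (Fin.cast List.length_replicate.symm i)).1, ?_⟩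
  simpa using (hm ⟨0, by simp; omega⟩).2

theorem iInter_sUnion_image_finite {E : Ordinal → Set ℕ} {t : List ℕ}
    {D : Fin t.length → Set Ordinal} (hD : Pairwise (Disjoint on D))
    (hempty : ∀ s : Fin t.length → Ordinal, Injective s → (∀ i, s i ∈ D i) →
      MatInt (tailMatrix E) t s = ∅) :
    (⋂ i, ⋃₀ (E '' D i)).Finite := by
  refine (finite_Iic t.sum).subset fun m hm ↦ ?_
  choose s hsD hms using fun i ↦ (by simpa using mem_iInter.1 hm i : ∃ α ∈ D i, m ∈ E α)
  have hs : Injective s := fun i j hij ↦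
    by_contra fun hne ↦ (hD hne).ne_of_mem (hsD i) (hsD j) hij
  by_contra hmN
  have hmem : m ∈ MatInt (tailMatrix E) t s := mem_matInt_tailMatrix.2 fun i ↦
    ⟨hms i, (List.le_sum_of_mem (t.get_mem i)).trans (not_le.1 hmN).le⟩
  rwa [hempty s hs hsD] at hmem

theorem statement_12_general (κ : Cardinal.{0}) (hreg : κ.IsRegular)
    (hC : PrincipleCminus κ) (k : ℕ) (hk : 1 ≤ k)
    (𝓐 : Set (Set ℕ)) (hcard : #𝓐 = κ) :
    (∃ 𝓑 ⊆ 𝓐, #𝓑 = κ ∧ ∀ F : Finset (Set ℕ), ↑F ⊆ 𝓑 → F.card = k →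
        (⋂₀ (F : Set (Set ℕ))).Infinite) ∨
    (∃ 𝓑 : Fin k → Set (Set ℕ), (∀ i, 𝓑 i ⊆ 𝓐 ∧ #(𝓑 i) = κ) ∧
        (⋂ i, ⋃₀ 𝓑 i).Finite) := by
  obtain ⟨E, hEmaps, hEinj⟩ := exists_mapsTo_injOn_Iio_ord hcard.ge
  rcases hC {t | t.length = k} (tailMatrix E) with ⟨S, hS, hne⟩ | ⟨t, rfl, D, hD, hempty⟩
  · refine .inl ⟨E '' S, (hEmaps.mono_left hS.1).image_subset,
      mk_image_eq_of_injOn_Iio_ord hEinj hS.1 (hS.mk_eq_s12 hreg), fun F hF hFk ↦ ?_⟩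
    obtain ⟨a, haS, hEa, hrange⟩ := F.exists_fin_enum_of_subset_image hF
    rw [← hrange, sInter_range]
    exact iInter_infinite_of_matInt_replicate_nonempty (hFk ▸ hk) fun n ↦
      hne _ (List.length_replicate.trans hFk) _ (hEa.of_comp.comp (Fin.cast_injective _))
        fun i ↦ haS _
  · have : Nonempty (Fin t.length) := Fin.pos_iff_nonempty.1 hk
    obtain ⟨D', hD', hdisj⟩ := exists_pairwiseDisjoint_subsets_of_cofinalIn hreg
      (by simpa using (hreg.nat_lt t.length).le) hD
    refine .inr ⟨fun i ↦ E '' D' i, fun i ↦ ⟨?_, ?_⟩, iInter_sUnion_image_finite hdisj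
      fun s hs hsD' ↦ hempty s hs fun i ↦ (hD' i).1 (hsD' i)⟩
    · exact (hEmaps.mono_left ((hD' i).1.trans (hD i).1)).image_subset
    · exact mk_image_eq_of_injOn_Iio_ord hEinj ((hD' i).1.trans (hD i).1) (hD' i).2

/-- Under C⁻(κ), for any κ-sized family 𝓐 of infinite subsets of ℕ and any `k ≥ 1`,
either some κ-sized subfamily has all k-wise intersections infinite, or there are
κ-sized subfamilies 𝓑₀, …, 𝓑_{k-1} with `⋂_{i<k} ⋃ 𝓑ᵢ` finite. -/
theorem statement_12 (κ : Cardinal.{0}) (hreg : κ.IsRegular) (hunc : ℵ₀ < κ)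
    (hC : PrincipleCminus κ) (k : ℕ) (hk : 1 ≤ k)
    (𝓐 : Set (Set ℕ)) (hinf : ∀ A ∈ 𝓐, A.Infinite) (hcard : #𝓐 = κ) :
    (∃ 𝓑 ⊆ 𝓐, #𝓑 = κ ∧ ∀ F : Finset (Set ℕ), ↑F ⊆ 𝓑 → F.card = k →
        (⋂₀ (F : Set (Set ℕ))).Infinite) ∨
    (∃ 𝓑 : Fin k → Set (Set ℕ), (∀ i, 𝓑 i ⊆ 𝓐 ∧ #(𝓑 i) = κ) ∧
        (⋂ i, ⋃₀ 𝓑 i).Finite) :=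
  statement_12_general κ hreg hC k hk 𝓐 hcard
end

section
/- Let κ be a regular uncountable cardinal and assume principle E⁻(κ). Then for every family 𝓐 of subsets of ℕ with |𝓐| = κ and every natural number k ≥ 1, either (a) the set I_k(𝓐) = {⋂𝓐' : 𝓐' is a k-element subfamily of 𝓐} has cardinality κ, or (b) there is a subfamily 𝓑 ⊆ 𝓐 of cardinality κ such that I_k(𝓑) is countable. -/
open Cardinal

/-- `I_k(𝓐)`: the set of intersections of k-element subfamilies of 𝓐. -/
def Ik (𝓐 : Set (Set ℕ)) (k : ℕ) : Set (Set ℕ) :=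
  {X : Set ℕ | ∃ F : Finset (Set ℕ), ↑F ⊆ 𝓐 ∧ F.card = k ∧ X = ⋂₀ (F : Set (Set ℕ))}

/-!
Enumerate `𝓐` injectively as `f : κ → 𝓐` and apply `E⁻(κ)` to the matrix `A(α, n) = f α` with
`T = {0^k}`, so that `A[s, 0^k] = ⋂ i, f (s i)`. In the first alternative, `f '' S` is the
required subfamily: it has size `κ` because `S` is cofinal in the regular `κ`. In the second, pick
for every `γ < κ` an injective tuple `s γ` through the `D i` above `γ`; if fewer than `κ`
intersections occurred, one representative tuple for each would be bounded below `κ`, and a tuple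
chosen above that bound is coordinatewise distinct from all of them, so its intersection is new.
-/

open Set Function

universe u

theorem iInter_mem_Ik {ι : Type*} [Fintype ι] {𝓑 : Set (Set ℕ)} {v : ι → Set ℕ}
    (hv : Injective v) (hv𝓑 : ∀ i, v i ∈ 𝓑) : ⋂ i, v i ∈ Ik 𝓑 (Fintype.card ι) := by
  classical
  refine ⟨Finset.univ.image v, ?_, Finset.card_image_of_injective _ hv, ?_⟩
  · simpa [range_subset_iff] using hv𝓑
  · simp [sInter_range]

theorem exists_iInter_eq_of_mem_Ik {𝓑 : Set (Set ℕ)} {k : ℕ} {X : Set ℕ} (hX : X ∈ Ik 𝓑 k)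
    (ι : Type*) [Fintype ι] (hι : Fintype.card ι = k) :
    ∃ v : ι → Set ℕ, Injective v ∧ (∀ i, v i ∈ 𝓑) ∧ X = ⋂ i, v i := by
  obtain ⟨F, hF𝓑, hFk, rfl⟩ := hX
  let e : ι ≃ F := Fintype.equivOfCardEq (by simp [hι, hFk])
  refine ⟨fun i => e i, Subtype.val_injective.comp e.injective, fun i => hF𝓑 (e i).2, ?_⟩
  rw [sInter_eq_iInter]
  exact (e.surjective.iInter_comp fun Y : F => (Y : Set ℕ)).symm

theorem mk_Ik_le (𝓑 : Set (Set ℕ)) (k : ℕ) : #(Ik 𝓑 k) ≤ #𝓑 ^ k := by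
  have hsub : Ik 𝓑 k ⊆ range fun v : Fin k → 𝓑 => ⋂ i, (v i : Set ℕ) := by
    intro X hX
    obtain ⟨v, -, hv𝓑, rfl⟩ := exists_iInter_eq_of_mem_Ik hX (Fin k) (Fintype.card_fin k)
    exact ⟨fun i => ⟨v i, hv𝓑 i⟩, rfl⟩
  calc #(Ik 𝓑 k) ≤ #(Fin k → 𝓑) := (mk_le_mk_of_subset hsub).trans mk_range_le
    _ = #𝓑 ^ k := by simp

theorem Ik_image_subset {β : Type*} (f : β → Set ℕ) (S : Set β) (ι : Type*) [Fintype ι] :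
    Ik (f '' S) (Fintype.card ι) ⊆
      {X | ∃ s : ι → β, Injective s ∧ (∀ i, s i ∈ S) ∧ X = ⋂ i, f (s i)} := by
  intro X hX
  obtain ⟨v, hv, hvS, rfl⟩ := exists_iInter_eq_of_mem_Ik hX ι rfl
  choose s hsS hsv using hvS
  refine ⟨s, fun i j hij => hv ?_, hsS, by simp only [hsv]⟩
  rw [← hsv i, ← hsv j, hij]

theorem exists_injOn_mapsTo_Iio_ord {α : Type u} [Nonempty α] {s : Set α} {κ : Cardinal.{u}}
    (h : κ ≤ #s) : ∃ f : Ordinal.{u} → α, InjOn f (Iio κ.ord) ∧ MapsTo f (Iio κ.ord) s := by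
  obtain ⟨e⟩ : Nonempty (Iio κ.ord ↪ s) := by
    rw [← lift_mk_le', Cardinal.mk_Iio_ordinal, card_ord]
    simpa using h
  classical
  refine ⟨fun γ => if hγ : γ < κ.ord then e ⟨γ, hγ⟩ else Classical.arbitrary α, ?_, ?_⟩
  · intro γ (hγ : γ < κ.ord) δ (hδ : δ < κ.ord) hγδ
    simp only [dif_pos hγ, dif_pos hδ] at hγδ
    exact congrArg Subtype.val (e.injective (Subtype.ext hγδ))
  · intro γ (hγ : γ < κ.ord)
    simpa only [dif_pos hγ] using (e ⟨γ, hγ⟩).2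

theorem exists_injective_forall_mem_gt {o : Ordinal} :
    ∀ {n : ℕ} {D : Fin n → Set Ordinal}, (∀ i, CofinalIn o (D i)) → ∀ γ < o,
      ∃ s : Fin n → Ordinal, Injective s ∧ ∀ i, s i ∈ D i ∧ γ < s i
  | 0, _, _, _, _ => ⟨finZeroElim, fun i => i.elim0, fun i => i.elim0⟩
  | _ + 1, D, hD, γ, hγ => by
    obtain ⟨β, hβD, hγβ⟩ := (hD 0).2 γ hγ
    obtain ⟨s, hs, hsD⟩ := exists_injective_forall_mem_gt (fun i => hD i.succ) β ((hD 0).1 hβD)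
    refine ⟨Fin.cons β s, Fin.cons_injective_iff.2 ⟨?_, hs⟩,
      Fin.cases ⟨hβD, hγβ⟩ fun i => ⟨(hsD i).1, hγβ.trans (hsD i).2⟩⟩
    rintro ⟨i, hi⟩
    exact (hsD i).2.ne' hi

theorem CofinalIn.le_mk_image {α : Type u} {κ : Cardinal.{u}} (hκ : κ.IsRegular)
    {S : Set Ordinal.{u}} (hS : CofinalIn κ.ord S) (Φ : Ordinal.{u} → α)
    (m : Ordinal.{u} → Ordinal.{u}) (hm : ∀ γ ∈ S, m γ < κ.ord)
    (hΦ : ∀ γ ∈ S, ∀ δ ∈ S, m γ < δ → Φ γ ≠ Φ δ) : κ ≤ #(Φ '' S) := by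
  by_contra! hlt
  choose pre hpreS hpre using fun w : Φ '' S => w.2
  obtain ⟨δ, hδS, hδ⟩ :=
    hS.2 _ (Ordinal.iSup_lt_of_lt_cof (by rwa [hκ.cof_ord]) fun w => hm _ (hpreS w))
  let w : Φ '' S := ⟨Φ δ, mem_image_of_mem Φ hδS⟩
  exact hΦ _ (hpreS w) δ hδS ((le_ciSup Ordinal.bddAbove_of_small w).trans_lt hδ) (hpre w)

theorem cofinalIn_Iio_ord {κ : Cardinal} (hκ : ℵ₀ ≤ κ) : CofinalIn κ.ord (Iio κ.ord) :=
  ⟨subset_rfl, fun γ hγ => ⟨Order.succ γ, (isSuccLimit_ord hκ).succ_lt hγ, Order.lt_succ γ⟩⟩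

theorem le_mk_Ik_of_separated {κ : Cardinal.{0}} (hκ : κ.IsRegular) {𝓐 : Set (Set ℕ)}
    {f : Ordinal → Set ℕ} (hf : InjOn f (Iio κ.ord)) (hf𝓐 : MapsTo f (Iio κ.ord) 𝓐) {n : ℕ}
    (D : Fin n → Set Ordinal) (hD : ∀ i, CofinalIn κ.ord (D i))
    (hsep : ∀ s₀ s₁ : Fin n → Ordinal, Injective s₀ → Injective s₁ →
      (∀ i, s₀ i ∈ D i) → (∀ i, s₁ i ∈ D i) → (∀ i, s₀ i ≠ s₁ i) →
        ⋂ i, f (s₀ i) ≠ ⋂ i, f (s₁ i)) :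
    κ ≤ #(Ik 𝓐 n) := by
  choose! s hs hsD using exists_injective_forall_mem_gt hD
  have hsκ : ∀ γ < κ.ord, ∀ i, s γ i < κ.ord := fun γ hγ i => (hD i).1 (hsD γ hγ i).1
  -- tuples whose entries all lie above `⨆ i, s γ i` are coordinatewise distinct from `s γ`
  have hn : #(Fin n) < κ.ord.cof := by
    simpa [hκ.cof_ord] using (natCast_lt_aleph0 (n := n)).trans_le hκ.aleph0_le
  have hm : ∀ γ < κ.ord, ⨆ i, s γ i < κ.ord := fun γ hγ =>
    Ordinal.iSup_lt_of_lt_cof hn (hsκ γ hγ)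
  have hle := (cofinalIn_Iio_ord hκ.aleph0_le).le_mk_image hκ (fun γ => ⋂ i, f (s γ i))
    (fun γ => ⨆ i, s γ i) hm fun γ hγ δ hδ hγδ => hsep _ _ (hs γ hγ) (hs δ hδ)
      (fun i => (hsD γ hγ i).1) (fun i => (hsD δ hδ i).1) fun i =>
        ((Ordinal.le_iSup _ i).trans_lt (hγδ.trans (hsD δ hδ i).2)).ne
  refine hle.trans (mk_le_mk_of_subset ?_)
  rintro _ ⟨γ, hγ, rfl⟩
  simpa using iInter_mem_Ik (fun i j hij => hs γ hγ (hf (hsκ γ hγ i) (hsκ γ hγ j) hij))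
    fun i => hf𝓐 (hsκ γ hγ i)

theorem statement_15_general (κ : Cardinal.{0}) (hreg : κ.IsRegular)
    (hE : PrincipleEminus κ) (k : ℕ)
    (𝓐 : Set (Set ℕ)) (hcard : #𝓐 = κ) :
    #(Ik 𝓐 k) = κ ∨ (∃ 𝓑 ⊆ 𝓐, #𝓑 = κ ∧ (Ik 𝓑 k).Countable) := by
  obtain ⟨f, hf, hf𝓐⟩ := exists_injOn_mapsTo_Iio_ord hcard.ge
  rcases hE {List.replicate k 0} (fun α _ => f α) with
    ⟨S, hS, hcount⟩ | ⟨t, rfl, D, hD, hsep⟩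
  · have hS𝓐 : f '' S ⊆ 𝓐 := (hf𝓐.mono_left hS.1).image_subset
    have hκS : κ ≤ #(f '' S) := hS.le_mk_image hreg f id (fun _ hγ => hS.1 hγ)
      fun _ hγ _ hδ hγδ => hf.ne (hS.1 hγ) (hS.1 hδ) hγδ.ne
    refine Or.inr ⟨f '' S, hS𝓐, ((mk_le_mk_of_subset hS𝓐).trans hcard.le).antisymm hκS, ?_⟩
    have hk : Fintype.card (Fin (List.replicate k 0).length) = k := by simp
    refine hk ▸ (hcount.mono ((Ik_image_subset f S _).trans ?_))
    rintro _ ⟨s, hs, hsS, rfl⟩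
    exact ⟨_, rfl, s, hs, hsS, rfl⟩
  · refine Or.inl (((mk_Ik_le 𝓐 k).trans ?_).antisymm ?_)
    · rw [hcard]
      exact power_nat_le hreg.aleph0_le
    · simpa using le_mk_Ik_of_separated hreg hf hf𝓐 D hD hsep

/-- Under E⁻(κ), for any κ-sized family 𝓐 of subsets of ℕ and `k ≥ 1`, either
`I_k(𝓐)` has cardinality κ, or some κ-sized subfamily 𝓑 has `I_k(𝓑)` countable. -/
theorem statement_15 (κ : Cardinal.{0}) (hreg : κ.IsRegular) (hunc : ℵ₀ < κ)
    (hE : PrincipleEminus κ) (k : ℕ) (hk : 1 ≤ k)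
    (𝓐 : Set (Set ℕ)) (hcard : #𝓐 = κ) :
    #(Ik 𝓐 k) = κ ∨ (∃ 𝓑 ⊆ 𝓐, #𝓑 = κ ∧ (Ik 𝓑 k).Countable) :=
  statement_15_general κ hreg hE k 𝓐 hcard
end

section
/- For every natural number k ≥ 1 there exists a family 𝓐 of infinite subsets of ℕ with |𝓐| = 2^ω such that for every (k+1)-element subfamily 𝓐' of 𝓐 the intersection ⋂𝓐' is finite, but for every k-element subfamily 𝓐' of 𝓐 the intersection ⋂𝓐' is infinite. -/
open Cardinal

namespace Stmt17

def seg (x : ℕ → Bool) (n : ℕ) : List Bool := (List.range n).map x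

@[simp] lemma seg_length (x : ℕ → Bool) (n : ℕ) : (seg x n).length = n := by simp [seg]

lemma seg_eq_iff {x y : ℕ → Bool} {n : ℕ} : seg x n = seg y n ↔ ∀ i < n, x i = y i := by
  simp [seg, List.map_eq_map_iff]

lemma eq_of_seg {x y : ℕ → Bool} (h : ∀ n, seg x n = seg y n) : x = y := by
  funext i
  exact (seg_eq_iff).1 (h (i + 1)) i (Nat.lt_succ_self i)

def Ax (k : ℕ) (x : ℕ → Bool) : Set (Finset (List Bool)) :=
  {S | S.card ≤ k ∧ ∃ n, (∀ l ∈ S, l.length = n) ∧ seg x n ∈ S}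

lemma singleton_mem_Ax {k : ℕ} (hk : 1 ≤ k) (x : ℕ → Bool) (n : ℕ) :
    ({seg x n} : Finset (List Bool)) ∈ Ax k x := by
  refine ⟨by simpa using hk, n, ?_, by simp⟩
  intro l hl
  rw [Finset.mem_singleton] at hl
  simp [hl]

lemma Ax_injective {k : ℕ} (hk : 1 ≤ k) : Function.Injective (Ax k) := by
  intro x y h
  refine eq_of_seg fun n => ?_
  have hx : ({seg x n} : Finset (List Bool)) ∈ Ax k y := h ▸ singleton_mem_Ax hk x n
  obtain ⟨-, m, hlen, hmem⟩ := hx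
  rw [Finset.mem_singleton] at hmem
  have hm : m = n := by simpa using (hlen (seg x n) (by simp)).symm
  rw [← hmem, hm]

noncomputable def enc : Finset (List Bool) ≃ ℕ :=
  Classical.choice nonempty_equiv_of_countable

noncomputable def B (k : ℕ) (x : ℕ → Bool) : Set ℕ := enc '' Ax k x

lemma B_injective {k : ℕ} (hk : 1 ≤ k) : Function.Injective (B k) :=
  fun x y h => Ax_injective hk (Set.image_injective.2 enc.injective h)

end Stmt17

open Stmt17 in
/-- For every `k ≥ 1` there is a family 𝓐 of infinite subsets of ℕ of cardinality
`2^ω` such that every (k+1)-element subfamily has finite intersection while every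
k-element subfamily has infinite intersection. -/
theorem statement_17 (k : ℕ) (hk : 1 ≤ k) :
    ∃ 𝓐 : Set (Set ℕ),
      #𝓐 = 2 ^ ℵ₀ ∧
      (∀ A ∈ 𝓐, A.Infinite) ∧
      (∀ F : Finset (Set ℕ), ↑F ⊆ 𝓐 → F.card = k + 1 → (⋂₀ (F : Set (Set ℕ))).Finite) ∧
      (∀ F : Finset (Set ℕ), ↑F ⊆ 𝓐 → F.card = k → (⋂₀ (F : Set (Set ℕ))).Infinite) := by
  classical
  refine ⟨Set.range (B k), ?_, ?_, ?_, ?_⟩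
  · rw [Cardinal.mk_range_eq _ (B_injective hk), Cardinal.mk_arrow]
    simp
  · rintro A ⟨x, rfl⟩
    refine Set.infinite_of_injective_forall_mem
      (f := fun n => enc ({seg x n} : Finset (List Bool))) ?_ ?_
    · intro n m h
      have h2 : ({seg x n} : Finset (List Bool)) = {seg x m} := enc.injective h
      have := Finset.singleton_injective h2
      simpa using congrArg List.length this
    · intro n
      exact ⟨{seg x n}, singleton_mem_Ax hk x n, rfl⟩
  · -- (k+1)-intersections finite
    intro F hF hcard
    have hex : ∀ A ∈ F, ∃ x : ℕ → Bool, B k x = A := fun A hA => hF hA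
    choose! g hg using hex
    -- distinct first coordinates
    have hgi : ∀ A ∈ F, ∀ B' ∈ F, A ≠ B' → ∃ i, g A i ≠ g B' i := by
      intro A hA B' hB' hne
      by_contra h
      push_neg at h
      exact hne ((hg A hA).symm.trans (by rw [funext h]; exact hg B' hB'))
    choose! d hd using hgi
    set N : ℕ := (F ×ˢ F).sup (fun p => d p.1 p.2) + 1 with hN
    have hdN : ∀ A ∈ F, ∀ B' ∈ F, d A B' < N := by
      intro A hA B' hB'
      exact Nat.lt_succ_of_le (Finset.le_sup (f := fun p => d p.1 p.2) (b := (A, B')) (Finset.mem_product.2 ⟨hA, hB'⟩))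
    have hsegne : ∀ n ≥ N, ∀ A ∈ F, ∀ B' ∈ F, A ≠ B' → seg (g A) n ≠ seg (g B') n := by
      intro n hn A hA B' hB' hne hseg
      exact hd A hA B' hB' hne (seg_eq_iff.1 hseg _ (lt_of_lt_of_le (hdN A hA B' hB') hn))
    -- the finite superset
    have hfin : ({S : Finset (List Bool) | ↑S ⊆ {l : List Bool | l.length < N}}).Finite := by
      have h1 := (List.finite_length_lt Bool N).finite_subsets
      exact (h1.preimage (Set.injOn_of_injective Finset.coe_injective))
    refine ((hfin.image enc).subset ?_)
    intro m hm
    have hF0 : F.Nonempty := Finset.card_pos.1 (by omega)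
    obtain ⟨A₀, hA₀⟩ := hF0
    set S : Finset (List Bool) := enc.symm m with hS
    have hSm : enc S = m := enc.apply_symm_apply m
    have hSA : ∀ A ∈ F, S ∈ Ax k (g A) := by
      intro A hA
      have : m ∈ B k (g A) := (hg A hA).symm ▸ hm A hA
      obtain ⟨S', hS', hS'm⟩ := this
      rwa [show S = S' from enc.injective (by rw [hSm, hS'm])]
    obtain ⟨hcard0, n₀, hlen0, hmem0⟩ := hSA A₀ hA₀
    -- common length n₀ for all A
    have hsegmem : ∀ A ∈ F, seg (g A) n₀ ∈ S := by
      intro A hA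
      obtain ⟨-, n, hlen, hmem⟩ := hSA A hA
      have : n = n₀ := by
        have h1 := hlen0 (seg (g A) n) hmem
        simpa using h1
      rwa [← this]
    -- n₀ < N
    have hn₀ : n₀ < N := by
      by_contra hge
      push_neg at hge
      have himg : F.image (fun A => seg (g A) n₀) ⊆ S := by
        intro l hl
        obtain ⟨A, hA, rfl⟩ := Finset.mem_image.1 hl
        exact hsegmem A hA
      have hinj : Set.InjOn (fun A => seg (g A) n₀) F := by
        intro A hA B' hB' h
        by_contra hne
        exact hsegne n₀ hge A hA B' hB' hne h
      have : (F.image (fun A => seg (g A) n₀)).card = k + 1 := by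
        rw [Finset.card_image_of_injOn hinj, hcard]
      have hle := Finset.card_le_card himg
      omega
    refine ⟨S, ?_, hSm⟩
    intro l hl
    exact lt_of_eq_of_lt (hlen0 l hl) hn₀
  · -- k-intersections infinite
    intro F hF hcard
    have hex : ∀ A ∈ F, ∃ x : ℕ → Bool, B k x = A := fun A hA => hF hA
    choose! g hg using hex
    have hF0 : F.Nonempty := Finset.card_pos.1 (by omega)
    obtain ⟨A₀, hA₀⟩ := hF0
    refine Set.infinite_of_injective_forall_mem
      (f := fun n => enc (F.image (fun A => seg (g A) n))) ?_ ?_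
    · intro n m h
      have h2 := enc.injective h
      have h3 : seg (g A₀) n ∈ F.image (fun A => seg (g A) m) :=
        h2 ▸ Finset.mem_image_of_mem _ hA₀
      obtain ⟨A, hA, hAeq⟩ := Finset.mem_image.1 h3
      have := congrArg List.length hAeq
      simpa using this.symm
    · intro n
      intro A hA
      rw [← hg A hA]
      refine ⟨F.image (fun A => seg (g A) n), ⟨?_, n, ?_, ?_⟩, rfl⟩
      · exact le_trans Finset.card_image_le (le_of_eq hcard)
      · intro l hl
        obtain ⟨A', -, rfl⟩ := Finset.mem_image.1 hl
        simp
      · exact Finset.mem_image_of_mem _ hA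
end
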